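/- arXiv:0804.2533 — 2 statements merged into one kernel-verified Lean document; each statement's English description precedes it below -/
import Mathlib

section
/- Let 𝒯 be a regular T-mesh occupying the rectangle Ω and let 𝒯^ε be an extension of 𝒯 associated with S(1,1,0,0,𝒯). Let v₁,…,v_{V⁺} be the crossing vertices of 𝒯^ε, and suppose b₁,…,b_{V⁺} ∈ S̄(1,1,0,0,𝒯^ε) satisfy b_i(v_j) = δ_{ij} for all i,j. Then Σ_{i=1}^{V⁺} b_i(x,y) = 1 for every (x,y) ∈ Ω. -/
open Filter Set MeasureTheory
open scoped Topology

noncomputable section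

/-- A closed axis-aligned rectangle with positive side lengths. -/
structure Rect where
  xmin : ℝ
  xmax : ℝ
  ymin : ℝ
  ymax : ℝ
  hx : xmin < xmax
  hy : ymin < ymax

/-- The set of points of a rectangle. -/
def Rect.toSet (c : Rect) : Set (ℝ × ℝ) :=
  Set.Icc c.xmin c.xmax ×ˢ Set.Icc c.ymin c.ymax

/-- A regular T-mesh: finitely many cells (closed axis-aligned rectangles) with pairwise
disjoint interiors whose union is a closed axis-aligned rectangle. -/
structure TMesh where
  cells : Set Rect
  outer : Rect
  finite_cells : cells.Finite
  pairwise_disjoint : cells.Pairwise fun c d => Disjoint (interior c.toSet) (interior d.toSet)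
  union_eq : (⋃ c ∈ cells, c.toSet) = outer.toSet

/-- The region occupied by a T-mesh. -/
def TMesh.Omega (T : TMesh) : Set (ℝ × ℝ) := T.outer.toSet

/-- The edge skeleton of a T-mesh: the union of the boundaries of all cells. -/
def TMesh.skeleton (T : TMesh) : Set (ℝ × ℝ) := ⋃ c ∈ T.cells, frontier c.toSet

/-- A vertex of the mesh: a corner of some cell. -/
def IsVertexOf (T : TMesh) (p : ℝ × ℝ) : Prop :=
  ∃ c ∈ T.cells, (p.1 = c.xmin ∨ p.1 = c.xmax) ∧ (p.2 = c.ymin ∨ p.2 = c.ymax)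

/-- A crossing vertex: an interior vertex from which four small axis-parallel segments
stay inside the edge skeleton. -/
def IsCrossingVertex (T : TMesh) (p : ℝ × ℝ) : Prop :=
  IsVertexOf T p ∧ p ∈ interior T.Omega ∧
    ∃ ε > (0 : ℝ), segment ℝ p (p + (ε, 0)) ⊆ T.skeleton ∧
      segment ℝ p (p - (ε, 0)) ⊆ T.skeleton ∧
      segment ℝ p (p + (0, ε)) ⊆ T.skeleton ∧
      segment ℝ p (p - (0, ε)) ⊆ T.skeleton

/-- A horizontal closed segment of positive length. -/
def IsHorizSeg (s : Set (ℝ × ℝ)) : Prop :=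
  ∃ a b y : ℝ, a < b ∧ s = Set.Icc a b ×ˢ ({y} : Set ℝ)

/-- A vertical closed segment of positive length. -/
def IsVertSeg (s : Set (ℝ × ℝ)) : Prop :=
  ∃ x a b : ℝ, a < b ∧ s = ({x} : Set ℝ) ×ˢ Set.Icc a b

/-- An l-edge: a maximal axis-parallel closed segment of positive length contained in the
edge skeleton. -/
def IsLEdge (T : TMesh) (s : Set (ℝ × ℝ)) : Prop :=
  (IsHorizSeg s ∨ IsVertSeg s) ∧ s ⊆ T.skeleton ∧
    ∀ s', (IsHorizSeg s' ∨ IsVertSeg s') → s' ⊆ T.skeleton → s ⊆ s' → s' = s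

def IsBoundaryLEdge (T : TMesh) (s : Set (ℝ × ℝ)) : Prop :=
  IsLEdge T s ∧ s ⊆ frontier T.Omega

def IsInteriorLEdge (T : TMesh) (s : Set (ℝ × ℝ)) : Prop :=
  IsLEdge T s ∧ ¬ s ⊆ frontier T.Omega

/-- There is a horizontal l-edge with endpoints `(a,y)`, `(b,y)`. -/
def HorizLEdgeAt (T : TMesh) (a b y : ℝ) : Prop :=
  a < b ∧ IsLEdge T (Set.Icc a b ×ˢ ({y} : Set ℝ))

/-- The number `V⁺` of crossing vertices. -/
def crossingCount (T : TMesh) : ℕ := {p | IsCrossingVertex T p}.ncard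

/-- The number `E` of interior l-edges. -/
def interiorLEdgeCount (T : TMesh) : ℕ := {s | IsInteriorLEdge T s}.ncard

/-- The number `F` of cells. -/
def cellCount (T : TMesh) : ℕ := T.cells.ncard

/-! Partial derivatives (within a set) and smoothness. -/

def pdXW (S : Set (ℝ × ℝ)) (f : ℝ × ℝ → ℝ) : ℝ × ℝ → ℝ :=
  fun p => derivWithin (fun x => f (x, p.2)) {x | (x, p.2) ∈ S} p.1

def pdYW (S : Set (ℝ × ℝ)) (f : ℝ × ℝ → ℝ) : ℝ × ℝ → ℝ :=
  fun p => derivWithin (fun y => f (p.1, y)) {y | (p.1, y) ∈ S} p.2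

/-- The mixed partial derivative `∂^{i+j} f/∂x^i∂y^j`, taken within the set `S`. -/
def mpW (S : Set (ℝ × ℝ)) (i j : ℕ) (f : ℝ × ℝ → ℝ) : ℝ × ℝ → ℝ :=
  (pdYW S)^[j] ((pdXW S)^[i] f)

/-- `f` has continuous mixed partials `∂^{i+j}f/∂x^i∂y^j` on `S` for all `0 ≤ i ≤ α`,
`0 ≤ j ≤ β` (smoothness indices `α, β ∈ ℤ` may be `-1`, in which case nothing is required
in that variable). -/
def SmoothWithin (S : Set (ℝ × ℝ)) (α β : ℤ) (f : ℝ × ℝ → ℝ) : Prop :=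
  (∀ i j : ℕ, (i : ℤ) ≤ α → (j : ℤ) ≤ β → ContinuousOn (mpW S i j f) S) ∧
  (∀ i : ℕ, (i : ℤ) < α → ∀ p ∈ S,
    HasDerivWithinAt (fun x => (pdXW S)^[i] f (x, p.2)) ((pdXW S)^[i+1] f p)
      {x | (x, p.2) ∈ S} p.1) ∧
  (∀ i j : ℕ, (i : ℤ) ≤ α → (j : ℤ) < β → ∀ p ∈ S,
    HasDerivWithinAt (fun y => mpW S i j f (p.1, y)) (mpW S i (j+1) f p)
      {y | (p.1, y) ∈ S} p.2)

/-- `f` agrees on each cell of `T` with a polynomial of bidegree at most `(m,n)`. -/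
def PiecewisePoly (m n : ℕ) (T : TMesh) (f : ℝ × ℝ → ℝ) : Prop :=
  ∀ c ∈ T.cells, ∃ p : MvPolynomial (Fin 2) ℝ,
    p.degreeOf 0 ≤ m ∧ p.degreeOf 1 ≤ n ∧
    ∀ q ∈ c.toSet, f q = MvPolynomial.eval ![q.1, q.2] p

/-- The spline space with homogeneous boundary conditions `S̄(m,n,α,β,T)`. -/
def SBar (m n : ℕ) (α β : ℤ) (T : TMesh) : Set (ℝ × ℝ → ℝ) :=
  {f | (∀ p, p ∉ T.Omega → f p = 0) ∧ PiecewisePoly m n T f ∧ SmoothWithin Set.univ α β f}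

/-- The spline space `S(m,n,α,β,T)` over the T-mesh: membership only constrains the values
on the occupied region `Ω` (smoothness is required within `Ω`). -/
def SOn (m n : ℕ) (α β : ℤ) (T : TMesh) : Set (ℝ × ℝ → ℝ) :=
  {f | PiecewisePoly m n T f ∧ SmoothWithin T.Omega α β f}

/-- The set of functions `S` is a linear space of dimension `d`. -/
def HasDim (S : Set (ℝ × ℝ → ℝ)) (d : ℕ) : Prop :=
  ∃ b : Fin d → (ℝ × ℝ → ℝ), (∀ i, b i ∈ S) ∧ LinearIndependent ℝ b ∧
    ∀ f ∈ S, ∃ c : Fin d → ℝ, f = ∑ i, c i • b i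

/-- The linear space `S` has dimension at least `d`. -/
def DimGE (S : Set (ℝ × ℝ → ℝ)) (d : ℕ) : Prop :=
  ∃ b : Fin d → (ℝ × ℝ → ℝ), (∀ i, b i ∈ S) ∧ LinearIndependent ℝ b

/-- The set of functions `S`, regarded as a space of functions on `Ω` (i.e. modulo the
values outside `Ω`), has dimension `d`. -/
def HasDimOn (Ω : Set (ℝ × ℝ)) (S : Set (ℝ × ℝ → ℝ)) (d : ℕ) : Prop :=
  ∃ b : Fin d → (ℝ × ℝ → ℝ), (∀ i, b i ∈ S) ∧
    LinearIndependent ℝ (fun i => Ω.restrict (b i)) ∧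
    ∀ f ∈ S, ∃ c : Fin d → ℝ, Set.EqOn f (∑ i, c i • b i) Ω

/-! The integration operator `I` and one-sided limits. -/

/-- `I(g)(x,y) = ∫_{-∞}^x ∫_{-∞}^y g(s,t) dt ds`. -/
def Ig (g : ℝ × ℝ → ℝ) : ℝ × ℝ → ℝ :=
  fun p => ∫ s in Set.Iic p.1, (∫ t in Set.Iic p.2, g (s, t))

/-- `g(s, y−)`, the one-sided limit from below in the second variable. -/
def limBelowY (g : ℝ × ℝ → ℝ) (y s : ℝ) : ℝ := limUnder (𝓝[<] y) fun t => g (s, t)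
/-- `g(s, y+)`. -/
def limAboveY (g : ℝ × ℝ → ℝ) (y s : ℝ) : ℝ := limUnder (𝓝[>] y) fun t => g (s, t)
/-- `g(x−, t)`. -/
def limLeftX (g : ℝ × ℝ → ℝ) (x t : ℝ) : ℝ := limUnder (𝓝[<] x) fun s => g (s, t)
/-- `g(x+, t)`. -/
def limRightX (g : ℝ × ℝ → ℝ) (x t : ℝ) : ℝ := limUnder (𝓝[>] x) fun s => g (s, t)

/-- The (cell-wise) partial derivative in `x`. -/
def pdX (f : ℝ × ℝ → ℝ) : ℝ × ℝ → ℝ := fun p => deriv (fun x => f (x, p.2)) p.1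
/-- The (cell-wise) partial derivative in `y`. -/
def pdY (f : ℝ × ℝ → ℝ) : ℝ × ℝ → ℝ := fun p => deriv (fun y => f (p.1, y)) p.2

/-- The union of the open interiors of the cells. -/
def cellInteriors (T : TMesh) : Set (ℝ × ℝ) := ⋃ c ∈ T.cells, interior c.toSet

open Classical in
/-- The cell-wise mixed partial derivative `∂²f/∂x∂y`, set to `0` off the cell interiors. -/
def Dmix (T : TMesh) (f : ℝ × ℝ → ℝ) : ℝ × ℝ → ℝ :=
  fun p => if p ∈ cellInteriors T then pdX (pdY f) p else 0

/-! Extended T-meshes. -/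

/-- The skeleton of a tensor-product mesh with grid lines `X 0 < ⋯ < X (2m+1)` and
`Y 0 < ⋯ < Y (2n+1)`. -/
def gridSkeleton (m n : ℕ) (X Y : ℕ → ℝ) : Set (ℝ × ℝ) :=
  {p : ℝ × ℝ | (∃ i ≤ 2 * m + 1, p.1 = X i) ∧ Y 0 ≤ p.2 ∧ p.2 ≤ Y (2 * n + 1)} ∪
  {p : ℝ × ℝ | (∃ j ≤ 2 * n + 1, p.2 = Y j) ∧ X 0 ≤ p.1 ∧ p.1 ≤ X (2 * m + 1)}

/-- The straight extensions, up to the rectangle `[x0,x1] × [y0,y1]`, of every l-edge of `T`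
having an endpoint on the boundary of the region of `T`. -/
def extSegs (T : TMesh) (x0 x1 y0 y1 : ℝ) : Set (ℝ × ℝ) :=
  {p : ℝ × ℝ | ∃ a b y, HorizLEdgeAt T a b y ∧ a = T.outer.xmin ∧
      p.2 = y ∧ x0 ≤ p.1 ∧ p.1 ≤ a} ∪
  {p : ℝ × ℝ | ∃ a b y, HorizLEdgeAt T a b y ∧ b = T.outer.xmax ∧
      p.2 = y ∧ b ≤ p.1 ∧ p.1 ≤ x1} ∪
  {p : ℝ × ℝ | ∃ x a b, a < b ∧ IsLEdge T (({x} : Set ℝ) ×ˢ Set.Icc a b) ∧ a = T.outer.ymin ∧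
      p.1 = x ∧ y0 ≤ p.2 ∧ p.2 ≤ a} ∪
  {p : ℝ × ℝ | ∃ x a b, a < b ∧ IsLEdge T (({x} : Set ℝ) ×ˢ Set.Icc a b) ∧ b = T.outer.ymax ∧
      p.1 = x ∧ b ≤ p.2 ∧ p.2 ≤ y1}

/-- `Te` is an extension of `T` associated with `S(m,n,m-1,n-1,T)`: a tensor-product mesh with
`2(m+1)` vertical and `2(n+1)` horizontal grid lines whose central rectangle is the region of
`T`, together with `T` and the straight extensions of all boundary-reaching edges of `T`. -/
def IsExtensionOf (m n : ℕ) (T Te : TMesh) : Prop :=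
  ∃ X Y : ℕ → ℝ,
    (∀ i < 2 * m + 1, X i < X (i + 1)) ∧ (∀ j < 2 * n + 1, Y j < Y (j + 1)) ∧
    X m = T.outer.xmin ∧ X (m + 1) = T.outer.xmax ∧
    Y n = T.outer.ymin ∧ Y (n + 1) = T.outer.ymax ∧
    Te.outer.xmin = X 0 ∧ Te.outer.xmax = X (2 * m + 1) ∧
    Te.outer.ymin = Y 0 ∧ Te.outer.ymax = Y (2 * n + 1) ∧
    Te.skeleton = T.skeleton ∪ gridSkeleton m n X Y ∪
      extSegs T (X 0) (X (2 * m + 1)) (Y 0) (Y (2 * n + 1))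

/-! Hierarchical T-meshes. -/

/-- `T` is a tensor-product mesh. -/
def IsTensorMesh (T : TMesh) : Prop :=
  ∃ (p q : ℕ) (x y : ℕ → ℝ), 0 < p ∧ 0 < q ∧
    (∀ i < p, x i < x (i + 1)) ∧ (∀ j < q, y j < y (j + 1)) ∧
    T.cells = {c : Rect | ∃ i < p, ∃ j < q,
      c.xmin = x i ∧ c.xmax = x (i + 1) ∧ c.ymin = y j ∧ c.ymax = y (j + 1)}

/-- The four equal subcells obtained by subdividing a cell by the two segments joining the
midpoints of opposite edges. -/
def Rect.quads (c : Rect) : Set Rect :=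
  { ⟨c.xmin, (c.xmin + c.xmax) / 2, c.ymin, (c.ymin + c.ymax) / 2,
      by linarith [c.hx], by linarith [c.hy]⟩,
    ⟨(c.xmin + c.xmax) / 2, c.xmax, c.ymin, (c.ymin + c.ymax) / 2,
      by linarith [c.hx], by linarith [c.hy]⟩,
    ⟨c.xmin, (c.xmin + c.xmax) / 2, (c.ymin + c.ymax) / 2, c.ymax,
      by linarith [c.hx], by linarith [c.hy]⟩,
    ⟨(c.xmin + c.xmax) / 2, c.xmax, (c.ymin + c.ymax) / 2, c.ymax,
      by linarith [c.hx], by linarith [c.hy]⟩ }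

/-- `T'` is obtained from `T` by subdividing exactly the cells in `S` into four quadrants. -/
def StepSubdiv (T T' : TMesh) (S : Set Rect) : Prop :=
  S ⊆ T.cells ∧ T'.outer = T.outer ∧
    T'.cells = (T.cells \ S) ∪ ⋃ c ∈ S, Rect.quads c

/-- A hierarchical T-mesh: the recursive construction `𝒯⁰, 𝒯¹, …, 𝒯^M`. -/
structure HierMesh where
  M : ℕ
  level : ℕ → TMesh
  subdivided : ℕ → Set Rect
  tensor0 : IsTensorMesh (level 0)
  step : ∀ k < M, StepSubdiv (level k) (level (k + 1)) (subdivided k)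

/-- The final mesh `𝒯 = 𝒯^M`. -/
def HierMesh.final (H : HierMesh) : TMesh := H.level H.M

/-- Two cells share a (horizontal or vertical) edge segment of positive length. -/
def EdgeAdjacent (c d : Rect) : Prop :=
  c ≠ d ∧ ∃ s : Set (ℝ × ℝ), (IsHorizSeg s ∨ IsVertSeg s) ∧ s ⊆ c.toSet ∩ d.toSet

/-- `c` is an isolated subdivided cell at step `k`: it is subdivided at step `k`, but no cell
of the level-`k` mesh sharing a horizontal or vertical edge with it is subdivided then. -/
def IsIsolatedAt (H : HierMesh) (k : ℕ) (c : Rect) : Prop :=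
  k < H.M ∧ c ∈ H.subdivided k ∧
    ∀ d ∈ (H.level k).cells, EdgeAdjacent c d → d ∉ H.subdivided k

/-- The isolated subdivided cells occurring in the construction of `H`. -/
def isoCells (H : HierMesh) : Set Rect := {c | ∃ k, IsIsolatedAt H k c}

/-- A regular T-mesh is crossing-vertex connected: any two distinct crossing vertices are
joined by a poly-line of axis-parallel mesh edges all of whose (corner) joints are crossing
vertices. -/
def IsCVConnected (T : TMesh) : Prop :=
  ∀ u v : ℝ × ℝ, IsCrossingVertex T u → IsCrossingVertex T v → u ≠ v →
    ∃ (N : ℕ) (p : ℕ → ℝ × ℝ), p 0 = u ∧ p N = v ∧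
      (∀ i < N, p i ≠ p (i + 1) ∧ segment ℝ (p i) (p (i + 1)) ⊆ T.skeleton ∧
        ((p i).1 = (p (i + 1)).1 ∨ (p i).2 = (p (i + 1)).2)) ∧
      (∀ i, 0 < i → i < N →
        (((p (i - 1)).2 = (p i).2 ∧ (p i).1 = (p (i + 1)).1) ∨
         ((p (i - 1)).1 = (p i).1 ∧ (p i).2 = (p (i + 1)).2)) →
        IsCrossingVertex T (p i))

/-- The level of an l-edge `s`: the first level of the hierarchy whose skeleton contains it. -/
def LEdgeLevel (H : HierMesh) (s : Set (ℝ × ℝ)) (k : ℕ) : Prop :=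
  s ⊆ (H.level k).skeleton ∧ ∀ j < k, ¬ s ⊆ (H.level j).skeleton

/-- `yb < yi < yt` are the heights of the two support l-edges of the horizontal l-edge
`[a,b] × {yi}` of the hierarchical mesh `H`: for a level-0 l-edge, the nearest level-0
horizontal l-edges below and above; for a level-`(k+1)` l-edge, the heights of the bottom
and top edges of a cell subdivided at step `k` whose inserted cross has its horizontal arm
on the l-edge. -/
def SupportHeights (H : HierMesh) (a b yi yb yt : ℝ) : Prop :=
  yb < yi ∧ yi < yt ∧
  ((LEdgeLevel H (Set.Icc a b ×ˢ ({yi} : Set ℝ)) 0 ∧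
     (∃ a' b', HorizLEdgeAt (H.level 0) a' b' yb) ∧
     (∃ a' b', HorizLEdgeAt (H.level 0) a' b' yt) ∧
     (∀ y a' b', HorizLEdgeAt (H.level 0) a' b' y → ¬(yb < y ∧ y < yt ∧ y ≠ yi))) ∨
   (∃ k, LEdgeLevel H (Set.Icc a b ×ˢ ({yi} : Set ℝ)) (k + 1) ∧
     ∃ c ∈ H.subdivided k, c.ymin = yb ∧ c.ymax = yt ∧ (c.ymin + c.ymax) / 2 = yi ∧
       a ≤ c.xmin ∧ c.xmax ≤ b))

/-- `U j` is a proper submesh of `U i` (its region is strictly contained in that of `U i`). -/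
def ProperSubmesh {ι : Type*} (U : ι → TMesh) (j i : ι) : Prop :=
  j ≠ i ∧ (U j).Omega ⊆ (U i).Omega ∧ (U j).Omega ≠ (U i).Omega

/-! The CVR graph. -/

/-- An edge of the CVR graph: a segment joining two consecutive crossing vertices along an
l-edge. -/
def IsCVREdge (T : TMesh) (s : Set (ℝ × ℝ)) : Prop :=
  ∃ u v : ℝ × ℝ, u ≠ v ∧ s = segment ℝ u v ∧ IsCrossingVertex T u ∧ IsCrossingVertex T v ∧
    (∃ l, IsLEdge T l ∧ segment ℝ u v ⊆ l) ∧
    ∀ w ∈ segment ℝ u v, IsCrossingVertex T w → w = u ∨ w = v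

/-- The union of the edges of the CVR graph, as a plane set. -/
def cvrGraphSet (T : TMesh) : Set (ℝ × ℝ) := ⋃₀ {s | IsCVREdge T s}

/-- The number of edges of the CVR graph. -/
def cvrEdgeCount (T : TMesh) : ℕ := {s | IsCVREdge T s}.ncard

/-- The number of bounded faces of the CVR graph: bounded connected components of the
complement of the union of its edges. -/
def cvrFaceCount (T : TMesh) : ℕ :=
  {U : Set (ℝ × ℝ) | (∃ p ∈ (cvrGraphSet T)ᶜ, U = connectedComponentIn (cvrGraphSet T)ᶜ p) ∧
     Bornology.IsBounded U}.ncard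
namespace PUaux

open Filter Set

lemma rect_mem_toSet {c : Rect} {p : ℝ × ℝ} :
    p ∈ c.toSet ↔ (c.xmin ≤ p.1 ∧ p.1 ≤ c.xmax) ∧ (c.ymin ≤ p.2 ∧ p.2 ≤ c.ymax) := by
  simp [Rect.toSet, Set.mem_prod, Set.mem_Icc, and_assoc, Prod.le_def]
  tauto

lemma rect_isClosed (c : Rect) : IsClosed c.toSet :=
  (isClosed_Icc).prod isClosed_Icc

lemma rect_interior (c : Rect) :
    interior c.toSet = Ioo c.xmin c.xmax ×ˢ Ioo c.ymin c.ymax := by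
  rw [Rect.toSet, interior_prod_eq, interior_Icc, interior_Icc]

lemma rect_mem_interior {c : Rect} {p : ℝ × ℝ} :
    p ∈ interior c.toSet ↔
      (c.xmin < p.1 ∧ p.1 < c.xmax) ∧ (c.ymin < p.2 ∧ p.2 < c.ymax) := by
  rw [rect_interior]; simp [Set.mem_prod, Set.mem_Ioo, and_assoc]

lemma rect_closure_interior (c : Rect) : closure (interior c.toSet) = c.toSet := by
  rw [rect_interior, closure_prod_eq, closure_Ioo c.hx.ne, closure_Ioo c.hy.ne, Rect.toSet]

lemma rect_frontier (c : Rect) : frontier c.toSet = c.toSet \ interior c.toSet :=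
  (rect_isClosed c).frontier_eq

lemma mem_skeleton_of_mem_not_interior {T : TMesh} {c : Rect} (hc : c ∈ T.cells)
    {p : ℝ × ℝ} (hp : p ∈ c.toSet) (hip : p ∉ interior c.toSet) : p ∈ T.skeleton := by
  refine Set.mem_biUnion hc ?_
  rw [rect_frontier]; exact ⟨hp, hip⟩

lemma not_mem_skeleton_of_mem_interior {T : TMesh} {c : Rect} (hc : c ∈ T.cells)
    {p : ℝ × ℝ} (hp : p ∈ interior c.toSet) : p ∉ T.skeleton := by
  intro hsk
  simp only [TMesh.skeleton, Set.mem_iUnion, exists_prop] at hsk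
  obtain ⟨d, hd, hpd⟩ := hsk
  rw [rect_frontier] at hpd
  by_cases hcd : c = d
  · subst hcd
    exact hpd.2 hp
  · have hpd' : p ∈ closure (interior d.toSet) := by
      rw [rect_closure_interior]
      exact hpd.1
    have : (interior d.toSet ∩ interior c.toSet).Nonempty := by
      have := mem_closure_iff.mp hpd' (interior c.toSet) isOpen_interior hp
      exact this.imp fun x hx => ⟨hx.2, hx.1⟩
    have hdis := T.pairwise_disjoint hd hc (fun h => hcd h.symm)
    exact absurd this (Set.not_nonempty_iff_eq_empty.mpr (Set.disjoint_iff_inter_eq_empty.mp hdis))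

lemma cell_subset_Omega {T : TMesh} {c : Rect} (hc : c ∈ T.cells) : c.toSet ⊆ T.Omega := by
  intro p hp
  rw [TMesh.Omega, ← T.union_eq]
  exact Set.mem_biUnion hc hp

lemma exists_cell_interior {T : TMesh} {p : ℝ × ℝ} (hp : p ∈ T.Omega)
    (hsk : p ∉ T.skeleton) : ∃ c ∈ T.cells, p ∈ interior c.toSet := by
  rw [TMesh.Omega, ← T.union_eq] at hp
  simp only [Set.mem_iUnion, exists_prop] at hp
  obtain ⟨c, hc, hpc⟩ := hp
  refine ⟨c, hc, ?_⟩
  by_contra h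
  exact hsk (mem_skeleton_of_mem_not_interior hc hpc h)

end PUaux
namespace PUaux
open Filter Set

lemma infinite_fiber_of_finite {c : ℕ → Rect} {S : Set ℕ} (hS : S.Infinite)
    {F : Set Rect} (hF : F.Finite) (h : ∀ n ∈ S, c n ∈ F) :
    ∃ e ∈ F, {n | n ∈ S ∧ c n = e}.Infinite := by
  by_contra hcon
  push_neg at hcon
  have : S ⊆ ⋃ e ∈ F, {n | n ∈ S ∧ c n = e} := by
    intro n hn
    exact Set.mem_biUnion (h n hn) ⟨hn, rfl⟩
  exact hS (Set.Finite.subset (hF.biUnion fun e he => hcon e he) this)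

lemma mem_of_infinite_tendsto {r : ℕ → ℝ × ℝ} {p : ℝ × ℝ}
    (hr : Tendsto r atTop (𝓝 p)) {S : Set ℕ} (hS : S.Infinite) {t : Set (ℝ × ℝ)}
    (hmem : ∀ n ∈ S, r n ∈ t) (ht : IsClosed t) : p ∈ t := by
  rw [← ht.closure_eq]
  refine mem_closure_of_frequently_of_tendsto ?_ hr
  rw [Filter.frequently_atTop]
  intro N
  obtain ⟨n, hn, hNn⟩ := hS.exists_gt N
  exact ⟨n, hNn.le, hmem n hn⟩

lemma linear_interior_min {a b lo hi x0 m : ℝ} (hlo : lo < x0) (hhi : x0 < hi)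
    (h1 : m ≤ a + b * lo) (h2 : m ≤ a + b * hi) (h0 : a + b * x0 = m) :
    a + b * hi = m := by
  have hb1 : b ≤ 0 := by nlinarith
  have hb2 : 0 ≤ b := by nlinarith
  have hb : b = 0 := le_antisymm hb1 hb2
  rw [hb] at h0 ⊢
  linarith

lemma eq_zero_on_frontier {u : ℝ × ℝ → ℝ} (hu : Continuous u) {K : Set (ℝ × ℝ)}
    (h0 : ∀ p ∉ K, u p = 0) : ∀ p ∈ frontier K, u p = 0 := by
  intro p hp
  have hcl : p ∈ closure Kᶜ := by
    rw [← frontier_compl] at hp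
    exact frontier_subset_closure hp
  have hsub : Kᶜ ⊆ {q | u q = 0} := fun q hq => h0 q hq
  have hclosed : IsClosed {q | u q = 0} := isClosed_eq hu continuous_const
  exact hclosed.closure_subset ((closure_mono hsub) hcl)

end PUaux
namespace PUaux
open Filter Set MvPolynomial

lemma bilinear_of_poly (p : MvPolynomial (Fin 2) ℝ) (h0 : p.degreeOf 0 ≤ 1)
    (h1 : p.degreeOf 1 ≤ 1) :
    ∃ A B C D : ℝ, ∀ x y : ℝ,
      MvPolynomial.eval ![x, y] p = A + B * x + C * y + D * (x * y) := by
  classical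
  have hdeg : ∀ d ∈ p.support, d 0 ≤ 1 ∧ d 1 ≤ 1 := by
    intro d hd
    constructor
    · refine le_trans ?_ h0
      rw [MvPolynomial.degreeOf_eq_sup 0 p]
      exact Finset.le_sup (f := fun m => m 0) hd
    · refine le_trans ?_ h1
      rw [MvPolynomial.degreeOf_eq_sup 1 p]
      exact Finset.le_sup (f := fun m => m 1) hd
  have hrepr : ∀ d : Fin 2 →₀ ℕ, d = Finsupp.single 0 (d 0) + Finsupp.single 1 (d 1) := by
    intro d
    ext i
    fin_cases i <;> simp [Finsupp.single_apply]
  have hsupp : p.support ⊆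
      ({0, Finsupp.single 0 1, Finsupp.single 1 1,
        Finsupp.single 0 1 + Finsupp.single 1 1} : Finset (Fin 2 →₀ ℕ)) := by
    intro d hd
    obtain ⟨hd0, hd1⟩ := hdeg d hd
    have hr := hrepr d
    simp only [Finset.mem_insert, Finset.mem_singleton]
    interval_cases h : d 0 <;> interval_cases h' : d 1
    · simp only [Finsupp.single_zero, add_zero, zero_add] at hr
      exact Or.inl hr
    · simp only [Finsupp.single_zero, add_zero, zero_add] at hr
      exact Or.inr (Or.inr (Or.inl hr))
    · simp only [Finsupp.single_zero, add_zero, zero_add] at hr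
      exact Or.inr (Or.inl hr)
    · exact Or.inr (Or.inr (Or.inr hr))
  refine ⟨p.coeff 0, p.coeff (Finsupp.single 0 1), p.coeff (Finsupp.single 1 1),
    p.coeff (Finsupp.single 0 1 + Finsupp.single 1 1), fun x y => ?_⟩
  have h00_10 : (0 : Fin 2 →₀ ℕ) ≠ Finsupp.single 0 1 := fun h => by
    simpa using DFunLike.congr_fun h 0
  have h00_01 : (0 : Fin 2 →₀ ℕ) ≠ Finsupp.single 1 1 := fun h => by
    simpa using DFunLike.congr_fun h 1
  have h00_11 : (0 : Fin 2 →₀ ℕ) ≠ Finsupp.single 0 1 + Finsupp.single 1 1 := fun h => by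
    simpa using DFunLike.congr_fun h 0
  have h10_01 : (Finsupp.single 0 1 : Fin 2 →₀ ℕ) ≠ Finsupp.single 1 1 := fun h => by
    simpa using DFunLike.congr_fun h 0
  have h10_11 : (Finsupp.single 0 1 : Fin 2 →₀ ℕ) ≠ Finsupp.single 0 1 + Finsupp.single 1 1 :=
    fun h => by simpa using DFunLike.congr_fun h 1
  have h01_11 : (Finsupp.single 1 1 : Fin 2 →₀ ℕ) ≠ Finsupp.single 0 1 + Finsupp.single 1 1 :=
    fun h => by simpa using DFunLike.congr_fun h 0
  rw [MvPolynomial.eval_eq']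
  rw [Finset.sum_subset hsupp (fun d _ hd => by
    rw [MvPolynomial.notMem_support_iff.mp hd, zero_mul])]
  have hprod : ∀ d : Fin 2 →₀ ℕ,
      (∏ i, (![x, y] : Fin 2 → ℝ) i ^ d i) = x ^ d 0 * y ^ d 1 := by
    intro d
    rw [Fin.prod_univ_two]
    simp
  rw [Finset.sum_insert (by simp [h00_10, h00_01, h00_11]),
      Finset.sum_insert (by simp [h10_01, h10_11]),
      Finset.sum_insert (by simp [h01_11]), Finset.sum_singleton]
  rw [hprod, hprod, hprod, hprod]
  simp only [Finsupp.coe_zero, Pi.zero_apply, Finsupp.single_apply, Finsupp.add_apply]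
  norm_num
  ring

end PUaux
namespace PUaux
open Filter Set

/-- The 1-D hat function: `0` at `z0` and `z3`, `1` on `[z1, z2]`, linear ramps. -/
def hat (z0 z1 z2 z3 t : ℝ) : ℝ :=
  max 0 (min 1 (min ((t - z0) / (z1 - z0)) ((z3 - t) / (z3 - z2))))

lemma hat_continuous (z0 z1 z2 z3 : ℝ) : Continuous (hat z0 z1 z2 z3) := by
  unfold hat
  fun_prop

lemma hat_nonneg (z0 z1 z2 z3 t : ℝ) : 0 ≤ hat z0 z1 z2 z3 t := le_max_left _ _

lemma hat_le_one (z0 z1 z2 z3 t : ℝ) : hat z0 z1 z2 z3 t ≤ 1 :=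
  max_le zero_le_one (min_le_left _ _)

lemma hat_eq_one {z0 z1 z2 z3 t : ℝ} (h01 : z0 < z1) (h23 : z2 < z3)
    (h1 : z1 ≤ t) (h2 : t ≤ z2) : hat z0 z1 z2 z3 t = 1 := by
  have ha : (1 : ℝ) ≤ (t - z0) / (z1 - z0) := by
    rw [le_div_iff₀ (by linarith)]; linarith
  have hb : (1 : ℝ) ≤ (z3 - t) / (z3 - z2) := by
    rw [le_div_iff₀ (by linarith)]; linarith
  unfold hat
  rw [min_eq_left (le_min ha hb), max_eq_right zero_le_one]

lemma hat_affine_left {z0 z1 z2 z3 : ℝ} (h01 : z0 < z1) (h12 : z1 ≤ z2) (h23 : z2 < z3) :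
    ∃ α β : ℝ, ∀ t ∈ Icc z0 z1, hat z0 z1 z2 z3 t = α + β * t := by
  refine ⟨-z0 / (z1 - z0), 1 / (z1 - z0), fun t ht => ?_⟩
  obtain ⟨ht0, ht1⟩ := ht
  have ha1 : (t - z0) / (z1 - z0) ≤ 1 := by
    rw [div_le_one (by linarith)]; linarith
  have ha0 : 0 ≤ (t - z0) / (z1 - z0) := by
    apply div_nonneg <;> linarith
  have hb : (1 : ℝ) ≤ (z3 - t) / (z3 - z2) := by
    rw [le_div_iff₀ (by linarith)]; linarith
  unfold hat
  rw [min_eq_left (le_trans ha1 hb), min_eq_right ha1, max_eq_right ha0]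
  field_simp
  ring

lemma hat_affine_mid {z0 z1 z2 z3 : ℝ} (h01 : z0 < z1) (h23 : z2 < z3) :
    ∃ α β : ℝ, ∀ t ∈ Icc z1 z2, hat z0 z1 z2 z3 t = α + β * t :=
  ⟨1, 0, fun t ht => by rw [hat_eq_one h01 h23 ht.1 ht.2]; ring⟩

lemma hat_affine_right {z0 z1 z2 z3 : ℝ} (h01 : z0 < z1) (h12 : z1 ≤ z2) (h23 : z2 < z3) :
    ∃ α β : ℝ, ∀ t ∈ Icc z2 z3, hat z0 z1 z2 z3 t = α + β * t := by
  refine ⟨z3 / (z3 - z2), -(1 / (z3 - z2)), fun t ht => ?_⟩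
  obtain ⟨ht0, ht1⟩ := ht
  have ha1 : (z3 - t) / (z3 - z2) ≤ 1 := by
    rw [div_le_one (by linarith)]; linarith
  have ha0 : 0 ≤ (z3 - t) / (z3 - z2) := by
    apply div_nonneg <;> linarith
  have hb : (1 : ℝ) ≤ (t - z0) / (z1 - z0) := by
    rw [le_div_iff₀ (by linarith)]; linarith
  unfold hat
  rw [min_eq_right (le_trans ha1 hb), min_eq_right ha1, max_eq_right ha0]
  field_simp
  ring

lemma hat_left_end {z0 z1 z2 z3 : ℝ} (h01 : z0 < z1) (h12 : z1 ≤ z2) (h23 : z2 < z3) :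
    hat z0 z1 z2 z3 z0 = 0 := by
  obtain ⟨α, β, h⟩ := hat_affine_left h01 h12 h23
  have h0 := h z0 ⟨le_refl _, h01.le⟩
  have ha : (z0 - z0) / (z1 - z0) = 0 := by simp
  unfold hat at h0 ⊢
  rw [ha] at h0 ⊢
  have hb : 0 ≤ (z3 - z0) / (z3 - z2) := by
    apply div_nonneg <;> linarith
  rw [min_eq_left hb, min_eq_right (by linarith : (0:ℝ) ≤ 1), max_eq_left (le_refl _)]

lemma hat_right_end {z0 z1 z2 z3 : ℝ} (h01 : z0 < z1) (h12 : z1 ≤ z2) (h23 : z2 < z3) :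
    hat z0 z1 z2 z3 z3 = 0 := by
  have ha : (z3 - z3) / (z3 - z2) = 0 := by simp
  unfold hat
  rw [ha]
  have hb : 0 ≤ (z3 - z0) / (z1 - z0) := by
    apply div_nonneg <;> linarith
  rw [min_eq_right hb, min_eq_right (by linarith : (0:ℝ) ≤ 1), max_eq_left (le_refl _)]

end PUaux
namespace PUaux
open Filter Set

theorem min_principle (Te : TMesh) (w : ℝ × ℝ → ℝ)
    (hc : Continuous w)
    (hpoly : ∀ c ∈ Te.cells, ∃ A B C D : ℝ, ∀ q ∈ c.toSet,
      w q = A + B * q.1 + C * q.2 + D * (q.1 * q.2))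
    (hcv : ∀ p, IsCrossingVertex Te p → 0 ≤ w p)
    (hbd : ∀ p ∈ frontier Te.Omega, 0 ≤ w p) :
    ∀ p ∈ Te.Omega, 0 ≤ w p := by
  by_contra hcon
  push_neg at hcon
  obtain ⟨p0, hp0K, hp0neg⟩ := hcon
  set K := Te.Omega with hKdef
  have hKeq : K = Set.Icc Te.outer.xmin Te.outer.xmax ×ˢ Set.Icc Te.outer.ymin Te.outer.ymax := rfl
  have hKcomp : IsCompact K := by
    rw [hKeq]; exact isCompact_Icc.prod isCompact_Icc
  have hKclosed : IsClosed K := rect_isClosed Te.outer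
  obtain ⟨pm, hpmK, hpmmin⟩ := hKcomp.exists_isMinOn ⟨p0, hp0K⟩ hc.continuousOn
  set m := w pm with hmdef
  have hmin : ∀ q ∈ K, m ≤ w q := fun q hq => isMinOn_iff.mp hpmmin q hq
  have hm : m < 0 := lt_of_le_of_lt (hmin p0 hp0K) hp0neg
  -- the set of minimizers and the lexicographically extremal minimizer
  set A : Set (ℝ × ℝ) := {p | p ∈ K ∧ w p = m} with hAdef
  have hAclosed : IsClosed A := hKclosed.inter (isClosed_eq hc continuous_const)
  have hAcomp : IsCompact A := hKcomp.of_isClosed_subset hAclosed (fun p hp => hp.1)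
  obtain ⟨p1, hp1A, hmax1⟩ := hAcomp.exists_isMaxOn ⟨pm, hpmK, rfl⟩
    continuous_fst.continuousOn
  set A1 : Set (ℝ × ℝ) := {p | p ∈ A ∧ p.1 = p1.1} with hA1def
  have hA1closed : IsClosed A1 := hAclosed.inter (isClosed_eq continuous_fst continuous_const)
  have hA1comp : IsCompact A1 := hAcomp.of_isClosed_subset hA1closed (fun p hp => hp.1)
  obtain ⟨p2, hp2A1, hmax2⟩ := hA1comp.exists_isMaxOn ⟨p1, hp1A, rfl⟩
    continuous_snd.continuousOn
  have hp2A : p2 ∈ A := hp2A1.1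
  have hp2K : p2 ∈ K := hp2A.1
  have hp2m : w p2 = m := hp2A.2
  have hp2x : p2.1 = p1.1 := hp2A1.2
  -- the two "no farther minimizer" facts
  have hcontra1 : ∀ q : ℝ × ℝ, q ∈ K → w q = m → q.1 ≤ p2.1 := by
    intro q hqK hqm
    have : q ∈ A := ⟨hqK, hqm⟩
    have := isMaxOn_iff.mp hmax1 q this
    rw [hp2x]; exact this
  have hcontra2 : ∀ q : ℝ × ℝ, q ∈ K → w q = m → q.1 = p2.1 → q.2 ≤ p2.2 := by
    intro q hqK hqm hqx
    have : q ∈ A1 := ⟨⟨hqK, hqm⟩, by rw [hqx, hp2x]⟩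
    exact isMaxOn_iff.mp hmax2 q this
  -- two "slide the minimum" steps
  have hstepx : ∀ e : Rect, e ∈ Te.cells → e.xmin < p2.1 → p2.1 < e.xmax →
      e.ymin ≤ p2.2 → p2.2 ≤ e.ymax → False := by
    intro e he hx1 hx2 hy1 hy2
    obtain ⟨A', B', C', D', hA'⟩ := hpoly e he
    have hmemlo : ((e.xmin, p2.2) : ℝ × ℝ) ∈ e.toSet :=
      rect_mem_toSet.mpr ⟨⟨le_refl _, e.hx.le⟩, hy1, hy2⟩
    have hmemhi : ((e.xmax, p2.2) : ℝ × ℝ) ∈ e.toSet :=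
      rect_mem_toSet.mpr ⟨⟨e.hx.le, le_refl _⟩, hy1, hy2⟩
    have hmemp : p2 ∈ e.toSet :=
      rect_mem_toSet.mpr ⟨⟨hx1.le, hx2.le⟩, hy1, hy2⟩
    have h1 : m ≤ A' + B' * e.xmin + C' * p2.2 + D' * (e.xmin * p2.2) := by
      have := hmin _ (cell_subset_Omega he hmemlo)
      rwa [hA' _ hmemlo] at this
    have h2 : m ≤ A' + B' * e.xmax + C' * p2.2 + D' * (e.xmax * p2.2) := by
      have := hmin _ (cell_subset_Omega he hmemhi)
      rwa [hA' _ hmemhi] at this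
    have h0 : A' + B' * p2.1 + C' * p2.2 + D' * (p2.1 * p2.2) = m := by
      rw [← hA' _ hmemp]; exact hp2m
    have key : (A' + C' * p2.2) + (B' + D' * p2.2) * e.xmax = m := by
      refine linear_interior_min hx1 hx2 ?_ ?_ ?_
      · nlinarith [h1]
      · nlinarith [h2]
      · nlinarith [h0]
    have hwhi : w (e.xmax, p2.2) = m := by
      rw [hA' _ hmemhi]; nlinarith [key]
    have := hcontra1 _ (cell_subset_Omega he hmemhi) hwhi
    simp only at this
    linarith
  have hstepy : ∀ e : Rect, e ∈ Te.cells → e.xmin ≤ p2.1 → p2.1 ≤ e.xmax →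
      e.ymin < p2.2 → p2.2 < e.ymax → False := by
    intro e he hx1 hx2 hy1 hy2
    obtain ⟨A', B', C', D', hA'⟩ := hpoly e he
    have hmemlo : ((p2.1, e.ymin) : ℝ × ℝ) ∈ e.toSet :=
      rect_mem_toSet.mpr ⟨⟨hx1, hx2⟩, le_refl _, e.hy.le⟩
    have hmemhi : ((p2.1, e.ymax) : ℝ × ℝ) ∈ e.toSet :=
      rect_mem_toSet.mpr ⟨⟨hx1, hx2⟩, e.hy.le, le_refl _⟩
    have hmemp : p2 ∈ e.toSet :=
      rect_mem_toSet.mpr ⟨⟨hx1, hx2⟩, hy1.le, hy2.le⟩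
    have h1 : m ≤ A' + B' * p2.1 + C' * e.ymin + D' * (p2.1 * e.ymin) := by
      have := hmin _ (cell_subset_Omega he hmemlo)
      rwa [hA' _ hmemlo] at this
    have h2 : m ≤ A' + B' * p2.1 + C' * e.ymax + D' * (p2.1 * e.ymax) := by
      have := hmin _ (cell_subset_Omega he hmemhi)
      rwa [hA' _ hmemhi] at this
    have h0 : A' + B' * p2.1 + C' * p2.2 + D' * (p2.1 * p2.2) = m := by
      rw [← hA' _ hmemp]; exact hp2m
    have key : (A' + B' * p2.1) + (C' + D' * p2.1) * e.ymax = m := by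
      refine linear_interior_min hy1 hy2 ?_ ?_ ?_
      · nlinarith [h1]
      · nlinarith [h2]
      · nlinarith [h0]
    have hwhi : w (p2.1, e.ymax) = m := by
      rw [hA' _ hmemhi]; nlinarith [key]
    have := hcontra2 _ (cell_subset_Omega he hmemhi) hwhi rfl
    simp only at this
    linarith
  -- p2 is in the interior of the region
  have hp2fr : p2 ∉ frontier K := by
    intro h
    have := hbd p2 h
    rw [hp2m] at this
    linarith
  have hp2int : p2 ∈ interior K := by
    have hfr := hKclosed.frontier_eq
    by_contra h
    exact hp2fr (by rw [hfr]; exact ⟨hp2K, h⟩)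
  obtain ⟨δ, hδpos, hball⟩ : ∃ δ > 0, Metric.ball p2 δ ⊆ K :=
    Metric.mem_nhds_iff.mp (mem_interior_iff_mem_nhds.mp hp2int)
  -- a vanishing sequence of scales
  set ε : ℕ → ℝ := fun n => min (δ / 2) (1 / ((n : ℝ) + 1)) with hεdef
  have hεpos : ∀ n, 0 < ε n := fun n =>
    lt_min (by linarith) (by positivity)
  have hεδ : ∀ n, ε n ≤ δ / 2 := fun n => min_le_left _ _
  have hεn : ∀ n, ε n ≤ 1 / ((n : ℝ) + 1) := fun n => min_le_right _ _
  have hε0 : Tendsto ε atTop (𝓝 0) :=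
    squeeze_zero (fun n => (hεpos n).le) hεn tendsto_one_div_add_atTop_nhds_zero_nat
  -- generic: find a cell whose interior contains points near p2 in a given direction
  have hfind : ∀ vv : ℕ → ℝ × ℝ, (∀ n, ‖vv n‖ ≤ ε n) →
      ∀ S : Set ℕ, S.Infinite →
      (∀ n ∈ S, ¬ (segment ℝ p2 (p2 + vv n) ⊆ Te.skeleton)) →
      ∃ e ∈ Te.cells, p2 ∈ e.toSet ∧ ∃ n ∈ S, ∃ θ : ℝ, 0 ≤ θ ∧ θ ≤ 1 ∧
        (p2.1 + θ * (vv n).1, p2.2 + θ * (vv n).2) ∈ interior e.toSet := by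
    intro vv hvv S hS hfail
    classical
    have hchoice : ∀ n, ∃ θ : ℝ, (0 ≤ θ ∧ θ ≤ 1) ∧
        (n ∈ S → (p2.1 + θ * (vv n).1, p2.2 + θ * (vv n).2) ∉ Te.skeleton) := by
      intro n
      by_cases hn : n ∈ S
      · obtain ⟨r, hrseg, hrsk⟩ := Set.not_subset.mp (hfail n hn)
        rw [segment_eq_image'] at hrseg
        obtain ⟨θ, hθ, hrθ⟩ := hrseg
        refine ⟨θ, ⟨hθ.1, hθ.2⟩, fun _ => ?_⟩
        have hrr : r = (p2.1 + θ * (vv n).1, p2.2 + θ * (vv n).2) := by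
          rw [← hrθ, add_sub_cancel_left]
          ext <;> simp [smul_eq_mul]
        rwa [hrr] at hrsk
      · exact ⟨0, ⟨le_refl _, zero_le_one⟩, fun h => absurd h hn⟩
    choose θ hθ01 hθsk using hchoice
    set r : ℕ → ℝ × ℝ := fun n => (p2.1 + θ n * (vv n).1, p2.2 + θ n * (vv n).2) with hrdef
    have hdist : ∀ n, dist (r n) p2 ≤ ε n := by
      intro n
      rw [Prod.dist_eq]
      have hv := hvv n
      rw [Prod.norm_def] at hv
      have hv1 : |(vv n).1| ≤ ε n := le_trans (le_max_left _ _) hv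
      have hv2 : |(vv n).2| ≤ ε n := le_trans (le_max_right _ _) hv
      have hθn := hθ01 n
      have hθabs : |θ n| ≤ 1 := abs_le.mpr ⟨by linarith [hθn.1], hθn.2⟩
      have e1 : dist (r n).1 p2.1 = |θ n| * |(vv n).1| := by
        simp [hrdef, Real.dist_eq, abs_sub_comm, abs_mul]
      have e2 : dist (r n).2 p2.2 = |θ n| * |(vv n).2| := by
        simp [hrdef, Real.dist_eq, abs_sub_comm, abs_mul]
      rw [e1, e2]
      refine max_le ?_ ?_
      · nlinarith [abs_nonneg (θ n), abs_nonneg ((vv n).1)]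
      · nlinarith [abs_nonneg (θ n), abs_nonneg ((vv n).2)]
    have hrK : ∀ n, r n ∈ K := by
      intro n
      apply hball
      have := hdist n
      have := hεδ n
      simp only [Metric.mem_ball]
      linarith
    have hrtendsto : Tendsto r atTop (𝓝 p2) := by
      rw [tendsto_iff_dist_tendsto_zero]
      exact squeeze_zero (fun n => dist_nonneg) hdist hε0
    -- choose a cell whose interior contains r n, for n ∈ S
    have hcell : ∀ n, ∃ e : Rect, n ∈ S → (e ∈ Te.cells ∧ r n ∈ interior e.toSet) := by
      intro n
      by_cases hn : n ∈ S
      · obtain ⟨e, he, hre⟩ := exists_cell_interior (hrK n) (hθsk n hn)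
        exact ⟨e, fun _ => ⟨he, hre⟩⟩
      · exact ⟨⟨0, 1, 0, 1, zero_lt_one, zero_lt_one⟩, fun h => absurd h hn⟩
    choose cc hcc using hcell
    obtain ⟨e, he, hfib⟩ := infinite_fiber_of_finite hS Te.finite_cells
      (fun n hn => (hcc n hn).1)
    have hmemint : ∀ n ∈ {n | n ∈ S ∧ cc n = e}, r n ∈ interior e.toSet := by
      intro n hn
      have := (hcc n hn.1).2
      rwa [hn.2] at this
    have hp2e : p2 ∈ e.toSet := by
      refine mem_of_infinite_tendsto hrtendsto hfib
        (fun n hn => interior_subset (hmemint n hn)) (rect_isClosed e)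
    obtain ⟨n0, hn0⟩ := hfib.nonempty
    exact ⟨e, he, hp2e, n0, hn0.1, θ n0, (hθ01 n0).1, (hθ01 n0).2, hmemint n0 hn0⟩
  -- diagonal: find the cell to the upper right of p2
  have hdiag : ∃ e ∈ Te.cells, p2 ∈ e.toSet ∧ p2.1 < e.xmax ∧ p2.2 < e.ymax := by
    classical
    have hqK : ∀ n : ℕ, (p2.1 + ε n, p2.2 + ε n) ∈ K := by
      intro n
      apply hball
      simp only [Metric.mem_ball, Prod.dist_eq]
      have hd1 : dist (p2.1 + ε n) p2.1 = ε n := by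
        rw [Real.dist_eq]
        simp [abs_of_pos (hεpos n)]
      have hd2 : dist (p2.2 + ε n) p2.2 = ε n := by
        rw [Real.dist_eq]
        simp [abs_of_pos (hεpos n)]
      rw [hd1, hd2, max_self]
      linarith [hεδ n, hεpos n]
    have hqcell : ∀ n : ℕ, ∃ e ∈ Te.cells, ((p2.1 + ε n, p2.2 + ε n) : ℝ × ℝ) ∈ e.toSet := by
      intro n
      have := hqK n
      rw [hKeq] at this
      have h2 : ((p2.1 + ε n, p2.2 + ε n) : ℝ × ℝ) ∈ ⋃ c ∈ Te.cells, c.toSet := by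
        rw [Te.union_eq]; exact this
      simpa using h2
    choose cc hcc hmem using hqcell
    obtain ⟨e, he, hfib⟩ := infinite_fiber_of_finite Set.infinite_univ Te.finite_cells
      (fun n _ => hcc n)
    have hqtendsto : Tendsto (fun n => ((p2.1 + ε n, p2.2 + ε n) : ℝ × ℝ)) atTop (𝓝 p2) := by
      rw [tendsto_iff_dist_tendsto_zero]
      refine squeeze_zero (fun n => dist_nonneg) ?_ hε0
      intro n
      simp only [Prod.dist_eq]
      have hd1 : dist (p2.1 + ε n) p2.1 = ε n := by
        rw [Real.dist_eq]; simp [abs_of_pos (hεpos n)]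
      have hd2 : dist (p2.2 + ε n) p2.2 = ε n := by
        rw [Real.dist_eq]; simp [abs_of_pos (hεpos n)]
      rw [hd1, hd2, max_self]
    have hp2e : p2 ∈ e.toSet := by
      refine mem_of_infinite_tendsto hqtendsto hfib (fun n hn => ?_) (rect_isClosed e)
      have := hmem n
      rwa [hn.2] at this
    obtain ⟨n0, hn0⟩ := hfib.nonempty
    have hq0 : ((p2.1 + ε n0, p2.2 + ε n0) : ℝ × ℝ) ∈ e.toSet := by
      have := hmem n0
      rwa [hn0.2] at this
    have hb := rect_mem_toSet.mp hq0
    refine ⟨e, he, hp2e, ?_, ?_⟩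
    · have := hb.1.2
      simp only at this
      linarith [hεpos n0]
    · have := hb.2.2
      simp only at this
      linarith [hεpos n0]
  obtain ⟨e, he, hp2e, hex, hey⟩ := hdiag
  have hb2 := rect_mem_toSet.mp hp2e
  -- case analysis on the position of p2 in e
  rcases lt_or_eq_of_le hb2.1.1 with hxlt | hxeq
  · exact hstepx e he hxlt hex hb2.2.1 hb2.2.2
  rcases lt_or_eq_of_le hb2.2.1 with hylt | hyeq
  · exact hstepy e he hb2.1.1 hb2.1.2 hylt hey
  -- corner case: p2 is a vertex of the mesh
  have hvert : IsVertexOf Te p2 := ⟨e, he, Or.inl hxeq.symm, Or.inl hyeq.symm⟩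
  have hskel : p2 ∈ Te.skeleton := by
    refine mem_skeleton_of_mem_not_interior he hp2e ?_
    rw [rect_mem_interior]
    intro h
    exact absurd h.1.1 (by rw [← hxeq]; exact lt_irrefl _)
  have hnc : ¬ IsCrossingVertex Te p2 := by
    intro h
    have := hcv p2 h
    linarith [hp2m ▸ this]
  have hdisj : ∀ n : ℕ,
      ¬ (segment ℝ p2 (p2 + (ε n, 0)) ⊆ Te.skeleton) ∨
      ¬ (segment ℝ p2 (p2 - (ε n, 0)) ⊆ Te.skeleton) ∨
      ¬ (segment ℝ p2 (p2 + (0, ε n)) ⊆ Te.skeleton) ∨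
      ¬ (segment ℝ p2 (p2 - (0, ε n)) ⊆ Te.skeleton) := by
    intro n
    by_contra hcon2
    push_neg at hcon2
    exact hnc ⟨hvert, hp2int, ε n, hεpos n, hcon2.1, hcon2.2.1, hcon2.2.2.1, hcon2.2.2.2⟩
  set N1 : Set ℕ := {n | ¬ (segment ℝ p2 (p2 + (ε n, 0)) ⊆ Te.skeleton)} with hN1
  set N2 : Set ℕ := {n | ¬ (segment ℝ p2 (p2 - (ε n, 0)) ⊆ Te.skeleton)} with hN2
  set N3 : Set ℕ := {n | ¬ (segment ℝ p2 (p2 + (0, ε n)) ⊆ Te.skeleton)} with hN3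
  set N4 : Set ℕ := {n | ¬ (segment ℝ p2 (p2 - (0, ε n)) ⊆ Te.skeleton)} with hN4
  have hinf : N1.Infinite ∨ N2.Infinite ∨ N3.Infinite ∨ N4.Infinite := by
    by_contra hfin
    push_neg at hfin
    have h1 := hfin.1
    have h2 := hfin.2.1
    have h3 := hfin.2.2.1
    have h4 := hfin.2.2.2
    have hsub : (Set.univ : Set ℕ) ⊆ N1 ∪ N2 ∪ N3 ∪ N4 := by
      intro n _
      rcases hdisj n with h | h | h | h
      · exact Or.inl (Or.inl (Or.inl h))
      · exact Or.inl (Or.inl (Or.inr h))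
      · exact Or.inl (Or.inr h)
      · exact Or.inr h
    exact Set.infinite_univ (Set.Finite.subset (((h1.union h2).union h3).union h4) hsub)
  have hnorm1 : ∀ n, ‖((ε n, 0) : ℝ × ℝ)‖ ≤ ε n := by
    intro n
    rw [Prod.norm_def]
    simp [abs_of_pos (hεpos n), Real.norm_eq_abs, (hεpos n).le]
  have hnorm2 : ∀ n, ‖((0, ε n) : ℝ × ℝ)‖ ≤ ε n := by
    intro n
    rw [Prod.norm_def]
    simp [abs_of_pos (hεpos n), Real.norm_eq_abs, (hεpos n).le]
  have hnorm1' : ∀ n, ‖((-(ε n), 0) : ℝ × ℝ)‖ ≤ ε n := by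
    intro n
    rw [Prod.norm_def]
    simp [abs_of_pos (hεpos n), Real.norm_eq_abs, (hεpos n).le]
  have hnorm2' : ∀ n, ‖((0, -(ε n)) : ℝ × ℝ)‖ ≤ ε n := by
    intro n
    rw [Prod.norm_def]
    simp [abs_of_pos (hεpos n), Real.norm_eq_abs, (hεpos n).le]
  rcases hinf with hS | hS | hS | hS
  · -- +x direction fails: a cell with left or right edge through p2
    obtain ⟨e', he', hp2e', n0, hn0, θ0, hθ0, hθ1, hint'⟩ :=
      hfind (fun n => ((ε n, 0) : ℝ × ℝ)) hnorm1 N1 hS (fun n hn => hn)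
    simp only [mul_zero, add_zero] at hint'
    rw [rect_mem_interior] at hint'
    have hb' := rect_mem_toSet.mp hp2e'
    exact hstepy e' he' hb'.1.1 hb'.1.2 hint'.2.1 hint'.2.2
  · -- -x direction fails
    have hrw : ∀ n, p2 - ((ε n, 0) : ℝ × ℝ) = p2 + ((-(ε n), 0) : ℝ × ℝ) := by
      intro n
      ext <;> simp [sub_eq_add_neg]
    obtain ⟨e', he', hp2e', n0, hn0, θ0, hθ0, hθ1, hint'⟩ :=
      hfind (fun n => ((-(ε n), 0) : ℝ × ℝ)) hnorm1' N2 hS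
        (fun n hn => by rw [← hrw n]; exact hn)
    simp only [mul_zero, add_zero] at hint'
    rw [rect_mem_interior] at hint'
    have hb' := rect_mem_toSet.mp hp2e'
    exact hstepy e' he' hb'.1.1 hb'.1.2 hint'.2.1 hint'.2.2
  · -- +y direction fails
    obtain ⟨e', he', hp2e', n0, hn0, θ0, hθ0, hθ1, hint'⟩ :=
      hfind (fun n => ((0, ε n) : ℝ × ℝ)) hnorm2 N3 hS (fun n hn => hn)
    simp only [mul_zero, add_zero] at hint'
    rw [rect_mem_interior] at hint'
    have hb' := rect_mem_toSet.mp hp2e'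
    exact hstepx e' he' hint'.1.1 hint'.1.2 hb'.2.1 hb'.2.2
  · -- -y direction fails
    have hrw : ∀ n, p2 - ((0, ε n) : ℝ × ℝ) = p2 + ((0, -(ε n)) : ℝ × ℝ) := by
      intro n
      ext <;> simp [sub_eq_add_neg]
    obtain ⟨e', he', hp2e', n0, hn0, θ0, hθ0, hθ1, hint'⟩ :=
      hfind (fun n => ((0, -(ε n)) : ℝ × ℝ)) hnorm2' N4 hS
        (fun n hn => by rw [← hrw n]; exact hn)
    simp only [mul_zero, add_zero] at hint'
    rw [rect_mem_interior] at hint'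
    have hb' := rect_mem_toSet.mp hp2e'
    exact hstepx e' he' hint'.1.1 hint'.1.2 hb'.2.1 hb'.2.2

end PUaux
set_option maxHeartbeats 1600000 in
/-- **Partition of unity.** If `Te` is an extension of `T` associated with `S(1,1,0,0,T)`,
`v₁, …, v_V` enumerate the crossing vertices of `Te`, and `bᵢ ∈ S̄(1,1,0,0,Te)` satisfy
`bᵢ (v_j) = δ_{ij}`, then `∑ᵢ bᵢ ≡ 1` on the region `Ω` of `T`. -/
theorem basis_partition_of_unity (T Te : TMesh) (hext : IsExtensionOf 1 1 T Te)
    (V : ℕ) (v : Fin V → ℝ × ℝ) (hv : Function.Injective v)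
    (hrange : ∀ p, IsCrossingVertex Te p ↔ ∃ i, v i = p)
    (b : Fin V → (ℝ × ℝ → ℝ)) (hb : ∀ i, b i ∈ SBar 1 1 0 0 Te)
    (hdelta : ∀ i j, b i (v j) = if i = j then (1 : ℝ) else 0) :
    ∀ p ∈ T.Omega, (∑ i, b i p) = 1 := by
  classical
  open PUaux in
  obtain ⟨X, Y, hX, hY, hX1, hX2, hY1, hY2, hTex0, hTex3, hTey0, hTey3, hskel⟩ := hext
  have hX01 : X 0 < X 1 := hX 0 (by norm_num)
  have hX12 : X 1 < X 2 := hX 1 (by norm_num)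
  have hX23 : X 2 < X 3 := hX 2 (by norm_num)
  have hY01 : Y 0 < Y 1 := hY 0 (by norm_num)
  have hY12 : Y 1 < Y 2 := hY 1 (by norm_num)
  have hY23 : Y 2 < Y 3 := hY 2 (by norm_num)
  have hX2' : X 2 = T.outer.xmax := hX2
  have hY2' : Y 2 = T.outer.ymax := hY2
  have hTex3' : Te.outer.xmax = X 3 := hTex3
  have hTey3' : Te.outer.ymax = Y 3 := hTey3
  -- the grid skeleton is part of the skeleton of the extended mesh
  have hgrid : gridSkeleton 1 1 X Y ⊆ Te.skeleton := by
    rw [hskel]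
    exact fun p hp => Set.mem_union_left _ (Set.mem_union_right _ hp)
  -- each cell of `Te` is inside the outer rectangle of `Te`
  have hcellbd : ∀ c ∈ Te.cells, X 0 ≤ c.xmin ∧ c.xmax ≤ X 3 ∧ Y 0 ≤ c.ymin ∧ c.ymax ≤ Y 3 := by
    intro c hc
    have hsub := cell_subset_Omega hc
    have h1 : ((c.xmin, c.ymin) : ℝ × ℝ) ∈ c.toSet :=
      rect_mem_toSet.mpr ⟨⟨le_refl _, c.hx.le⟩, le_refl _, c.hy.le⟩
    have h2 : ((c.xmax, c.ymax) : ℝ × ℝ) ∈ c.toSet :=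
      rect_mem_toSet.mpr ⟨⟨c.hx.le, le_refl _⟩, c.hy.le, le_refl _⟩
    have hb1 := rect_mem_toSet.mp (hsub h1)
    have hb2 := rect_mem_toSet.mp (hsub h2)
    rw [hTex0, hTey0] at hb1
    rw [hTex3', hTey3'] at hb2
    exact ⟨hb1.1.1, hb2.1.2, hb1.2.1, hb2.2.2⟩
  -- cells do not cross the inner grid lines
  have hnocrossX : ∀ c ∈ Te.cells, ∀ i : ℕ, i ≤ 3 → ¬ (c.xmin < X i ∧ X i < c.xmax) := by
    intro c hc i hi ⟨ha, hb'⟩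
    obtain ⟨hbd0, hbd3, hbd0', hbd3'⟩ := hcellbd c hc
    have hmid : c.ymin < (c.ymin + c.ymax) / 2 ∧ (c.ymin + c.ymax) / 2 < c.ymax := by
      constructor <;> linarith [c.hy]
    have hintmem : ((X i, (c.ymin + c.ymax) / 2) : ℝ × ℝ) ∈ interior c.toSet :=
      rect_mem_interior.mpr ⟨⟨ha, hb'⟩, hmid.1, hmid.2⟩
    have hgm : ((X i, (c.ymin + c.ymax) / 2) : ℝ × ℝ) ∈ gridSkeleton 1 1 X Y := by
      left
      refine ⟨⟨i, by norm_num [hi], rfl⟩, ?_, ?_⟩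
      · show Y 0 ≤ (c.ymin + c.ymax) / 2
        linarith [hmid.1]
      · show (c.ymin + c.ymax) / 2 ≤ Y (2 * 1 + 1)
        have : (2 * 1 + 1 : ℕ) = 3 := by norm_num
        rw [this]
        linarith [hmid.2]
    exact not_mem_skeleton_of_mem_interior hc hintmem (hgrid hgm)
  have hnocrossY : ∀ c ∈ Te.cells, ∀ j : ℕ, j ≤ 3 → ¬ (c.ymin < Y j ∧ Y j < c.ymax) := by
    intro c hc j hj ⟨ha, hb'⟩
    obtain ⟨hbd0, hbd3, hbd0', hbd3'⟩ := hcellbd c hc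
    have hmid : c.xmin < (c.xmin + c.xmax) / 2 ∧ (c.xmin + c.xmax) / 2 < c.xmax := by
      constructor <;> linarith [c.hx]
    have hintmem : (((c.xmin + c.xmax) / 2, Y j) : ℝ × ℝ) ∈ interior c.toSet :=
      rect_mem_interior.mpr ⟨⟨hmid.1, hmid.2⟩, ha, hb'⟩
    have hgm : (((c.xmin + c.xmax) / 2, Y j) : ℝ × ℝ) ∈ gridSkeleton 1 1 X Y := by
      right
      refine ⟨⟨j, by norm_num [hj], rfl⟩, ?_, ?_⟩
      · show X 0 ≤ (c.xmin + c.xmax) / 2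
        linarith [hmid.1]
      · show (c.xmin + c.xmax) / 2 ≤ X (2 * 1 + 1)
        have : (2 * 1 + 1 : ℕ) = 3 := by norm_num
        rw [this]
        linarith [hmid.2]
    exact not_mem_skeleton_of_mem_interior hc hintmem (hgrid hgm)
  -- trichotomy for each cell in each direction
  have htrichX : ∀ c ∈ Te.cells,
      (X 0 ≤ c.xmin ∧ c.xmax ≤ X 1) ∨ (X 1 ≤ c.xmin ∧ c.xmax ≤ X 2) ∨
      (X 2 ≤ c.xmin ∧ c.xmax ≤ X 3) := by
    intro c hc
    obtain ⟨hbd0, hbd3, _, _⟩ := hcellbd c hc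
    rcases le_or_gt c.xmax (X 1) with h1 | h1
    · exact Or.inl ⟨hbd0, h1⟩
    have hx1 : X 1 ≤ c.xmin := by
      by_contra h
      exact hnocrossX c hc 1 (by norm_num) ⟨lt_of_not_ge h, h1⟩
    rcases le_or_gt c.xmax (X 2) with h2 | h2
    · exact Or.inr (Or.inl ⟨hx1, h2⟩)
    have hx2 : X 2 ≤ c.xmin := by
      by_contra h
      exact hnocrossX c hc 2 (by norm_num) ⟨lt_of_not_ge h, h2⟩
    exact Or.inr (Or.inr ⟨hx2, hbd3⟩)
  have htrichY : ∀ c ∈ Te.cells,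
      (Y 0 ≤ c.ymin ∧ c.ymax ≤ Y 1) ∨ (Y 1 ≤ c.ymin ∧ c.ymax ≤ Y 2) ∨
      (Y 2 ≤ c.ymin ∧ c.ymax ≤ Y 3) := by
    intro c hc
    obtain ⟨_, _, hbd0, hbd3⟩ := hcellbd c hc
    rcases le_or_gt c.ymax (Y 1) with h1 | h1
    · exact Or.inl ⟨hbd0, h1⟩
    have hy1 : Y 1 ≤ c.ymin := by
      by_contra h
      exact hnocrossY c hc 1 (by norm_num) ⟨lt_of_not_ge h, h1⟩
    rcases le_or_gt c.ymax (Y 2) with h2 | h2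
    · exact Or.inr (Or.inl ⟨hy1, h2⟩)
    have hy2 : Y 2 ≤ c.ymin := by
      by_contra h
      exact hnocrossY c hc 2 (by norm_num) ⟨lt_of_not_ge h, h2⟩
    exact Or.inr (Or.inr ⟨hy2, hbd3⟩)
  -- the tensor-product hat function
  set g : ℝ × ℝ → ℝ :=
    fun p => hat (X 0) (X 1) (X 2) (X 3) p.1 * hat (Y 0) (Y 1) (Y 2) (Y 3) p.2 with hgdef
  have hgc : Continuous g :=
    ((hat_continuous _ _ _ _).comp continuous_fst).mul
      ((hat_continuous _ _ _ _).comp continuous_snd)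
  have hg01 : ∀ p : ℝ × ℝ, 0 ≤ g p ∧ g p ≤ 1 := by
    intro p
    constructor
    · exact mul_nonneg (hat_nonneg _ _ _ _ _) (hat_nonneg _ _ _ _ _)
    · exact mul_le_one₀ (hat_le_one _ _ _ _ _) (hat_nonneg _ _ _ _ _) (hat_le_one _ _ _ _ _)
  -- affine pieces of g on each cell
  have hgx : ∀ c ∈ Te.cells, ∃ α β : ℝ, ∀ t ∈ Set.Icc c.xmin c.xmax,
      hat (X 0) (X 1) (X 2) (X 3) t = α + β * t := by
    intro c hc
    rcases htrichX c hc with ⟨ha, hb'⟩ | ⟨ha, hb'⟩ | ⟨ha, hb'⟩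
    · obtain ⟨α, β, h⟩ := hat_affine_left hX01 hX12.le hX23
      exact ⟨α, β, fun t ht => h t ⟨le_trans ha ht.1, le_trans ht.2 hb'⟩⟩
    · obtain ⟨α, β, h⟩ := hat_affine_mid hX01 hX23
      exact ⟨α, β, fun t ht => h t ⟨le_trans ha ht.1, le_trans ht.2 hb'⟩⟩
    · obtain ⟨α, β, h⟩ := hat_affine_right hX01 hX12.le hX23
      exact ⟨α, β, fun t ht => h t ⟨le_trans ha ht.1, le_trans ht.2 hb'⟩⟩
  have hgy : ∀ c ∈ Te.cells, ∃ α β : ℝ, ∀ t ∈ Set.Icc c.ymin c.ymax,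
      hat (Y 0) (Y 1) (Y 2) (Y 3) t = α + β * t := by
    intro c hc
    rcases htrichY c hc with ⟨ha, hb'⟩ | ⟨ha, hb'⟩ | ⟨ha, hb'⟩
    · obtain ⟨α, β, h⟩ := hat_affine_left hY01 hY12.le hY23
      exact ⟨α, β, fun t ht => h t ⟨le_trans ha ht.1, le_trans ht.2 hb'⟩⟩
    · obtain ⟨α, β, h⟩ := hat_affine_mid hY01 hY23
      exact ⟨α, β, fun t ht => h t ⟨le_trans ha ht.1, le_trans ht.2 hb'⟩⟩
    · obtain ⟨α, β, h⟩ := hat_affine_right hY01 hY12.le hY23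
      exact ⟨α, β, fun t ht => h t ⟨le_trans ha ht.1, le_trans ht.2 hb'⟩⟩
  -- g equals 1 on Ω and 0 on the outer boundary
  have hgΩ : ∀ p ∈ T.Omega, g p = 1 := by
    intro p hp
    have hmem := rect_mem_toSet.mp hp
    rw [← hX1, ← hX2', ← hY1, ← hY2'] at hmem
    rw [hgdef]
    simp only
    rw [hat_eq_one hX01 hX23 hmem.1.1 hmem.1.2, hat_eq_one hY01 hY23 hmem.2.1 hmem.2.2]
    norm_num
  have hgfr : ∀ p ∈ frontier Te.Omega, g p = 0 := by
    intro p hp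
    have hfr : frontier Te.Omega = Te.outer.toSet \ interior Te.outer.toSet :=
      rect_frontier Te.outer
    rw [hfr] at hp
    have hmem := rect_mem_toSet.mp hp.1
    rw [hTex0, hTey0, hTex3', hTey3'] at hmem
    have hni := hp.2
    have hdisj : p.1 = X 0 ∨ p.1 = X 3 ∨ p.2 = Y 0 ∨ p.2 = Y 3 := by
      by_contra h
      push_neg at h
      obtain ⟨h1, h2, h3, h4⟩ := h
      refine hni (rect_mem_interior.mpr ⟨⟨?_, ?_⟩, ?_, ?_⟩)
      · rw [hTex0]; exact lt_of_le_of_ne hmem.1.1 (Ne.symm h1)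
      · rw [hTex3']; exact lt_of_le_of_ne hmem.1.2 h2
      · rw [hTey0]; exact lt_of_le_of_ne hmem.2.1 (Ne.symm h3)
      · rw [hTey3']; exact lt_of_le_of_ne hmem.2.2 h4
    rw [hgdef]
    simp only
    rcases hdisj with h | h | h | h
    · rw [h, hat_left_end hX01 hX12.le hX23, zero_mul]
    · rw [h, hat_right_end hX01 hX12.le hX23, zero_mul]
    · rw [h, hat_left_end hY01 hY12.le hY23, mul_zero]
    · rw [h, hat_right_end hY01 hY12.le hY23, mul_zero]
  -- the sum of the basis functions
  set f : ℝ × ℝ → ℝ := fun p => ∑ i, b i p with hfdef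
  have hfc : Continuous f := by
    refine continuous_finset_sum _ fun i _ => ?_
    have hs := (hb i).2.2.1 0 0 (by norm_num) (by norm_num)
    have : mpW Set.univ 0 0 (b i) = b i := by
      rw [mpW, Function.iterate_zero_apply, Function.iterate_zero_apply]
    rw [this] at hs
    exact continuousOn_univ.mp hs
  have hfpoly : ∀ c ∈ Te.cells, ∃ A B C D : ℝ, ∀ q ∈ c.toSet,
      f q = A + B * q.1 + C * q.2 + D * (q.1 * q.2) := by
    intro c hc
    have hbil : ∀ i : Fin V, ∃ A B C D : ℝ, ∀ q ∈ c.toSet,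
        b i q = A + B * q.1 + C * q.2 + D * (q.1 * q.2) := by
      intro i
      obtain ⟨p, hdeg0, hdeg1, hp⟩ := (hb i).2.1 c hc
      obtain ⟨A, B, C, D, h⟩ := bilinear_of_poly p hdeg0 hdeg1
      exact ⟨A, B, C, D, fun q hq => by rw [hp q hq, h q.1 q.2]⟩
    choose Ai Bi Ci Di hi using hbil
    refine ⟨∑ i, Ai i, ∑ i, Bi i, ∑ i, Ci i, ∑ i, Di i, fun q hq => ?_⟩
    rw [hfdef]
    simp only
    rw [Finset.sum_congr rfl (fun i _ => hi i q hq)]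
    rw [Finset.sum_add_distrib, Finset.sum_add_distrib, Finset.sum_add_distrib,
      ← Finset.sum_mul, ← Finset.sum_mul, ← Finset.sum_mul]
  have hfcv : ∀ p, IsCrossingVertex Te p → f p = 1 := by
    intro p hp
    obtain ⟨i, rfl⟩ := (hrange p).mp hp
    rw [hfdef]
    simp only
    rw [Finset.sum_congr rfl (fun j _ => hdelta j i)]
    simp
  have hf0 : ∀ p ∉ Te.Omega, f p = 0 := by
    intro p hp
    rw [hfdef]
    simp only
    rw [Finset.sum_congr rfl (fun i _ => (hb i).1 p hp)]
    simp
  have hffr : ∀ p ∈ frontier Te.Omega, f p = 0 := eq_zero_on_frontier hfc hf0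
  -- first application of the minimum principle: f ≥ g
  have h1 := min_principle Te (fun q => f q - g q) (hfc.sub hgc)
    (by
      intro c hc
      obtain ⟨A, B, C, D, hABCD⟩ := hfpoly c hc
      obtain ⟨αx, βx, hax⟩ := hgx c hc
      obtain ⟨αy, βy, hay⟩ := hgy c hc
      refine ⟨A - αx * αy, B - βx * αy, C - αx * βy, D - βx * βy, fun q hq => ?_⟩
      have hqm := rect_mem_toSet.mp hq
      rw [hABCD q hq, hgdef]
      simp only
      rw [hax q.1 ⟨hqm.1.1, hqm.1.2⟩, hay q.2 ⟨hqm.2.1, hqm.2.2⟩]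
      ring)
    (by
      intro p hp
      have := hfcv p hp
      rw [this]
      linarith [(hg01 p).2])
    (by
      intro p hp
      rw [hffr p hp, hgfr p hp]
      norm_num)
  -- second application: 2 - f ≥ g
  have h2 := min_principle Te (fun q => (2 - f q) - g q)
    ((continuous_const.sub hfc).sub hgc)
    (by
      intro c hc
      obtain ⟨A, B, C, D, hABCD⟩ := hfpoly c hc
      obtain ⟨αx, βx, hax⟩ := hgx c hc
      obtain ⟨αy, βy, hay⟩ := hgy c hc
      refine ⟨2 - A - αx * αy, -B - βx * αy, -C - αx * βy, -D - βx * βy, fun q hq => ?_⟩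
      have hqm := rect_mem_toSet.mp hq
      rw [hABCD q hq, hgdef]
      simp only
      rw [hax q.1 ⟨hqm.1.1, hqm.1.2⟩, hay q.2 ⟨hqm.2.1, hqm.2.2⟩]
      ring)
    (by
      intro p hp
      have := hfcv p hp
      rw [this]
      linarith [(hg01 p).2])
    (by
      intro p hp
      rw [hffr p hp, hgfr p hp]
      norm_num)
  -- conclusion
  intro p hp
  have hTsub : p ∈ Te.Omega := by
    have hmem := rect_mem_toSet.mp hp
    rw [← hX1, ← hX2', ← hY1, ← hY2'] at hmem
    refine rect_mem_toSet.mpr ?_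
    rw [hTex0, hTey0, hTex3', hTey3']
    exact ⟨⟨by linarith [hmem.1.1], by linarith [hmem.1.2]⟩,
      by linarith [hmem.2.1], by linarith [hmem.2.2]⟩
  have hg1 := hgΩ p hp
  have ha := h1 p hTsub
  have hb' := h2 p hTsub
  rw [hg1] at ha hb'
  show f p = 1
  linarith
end
end

section
/- Let 𝒯 be a regular T-mesh occupying Ω = [x_l,x_r]×[y_b,y_t], let y₀ < y₁ < ⋯ < y_n be the distinct y-coordinates of the horizontal l-edges of 𝒯, and let g ∈ S̄(1,1,0,0,𝒯). Then ∫_{x_l}^{x_r} ∂g/∂y(s,y_i−) ds = ∫_{x_l}^{x_r} ∂g/∂y(s,y_i+) ds for all i = 0,1,…,n if and only if ∫_{x_l}^{x_r} g(s,y_i) ds = 0 for all i = 1,…,n−1. The analogous equivalence holds with the roles of x and y exchanged, using the distinct x-coordinates of the vertical l-edges. -/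
open Filter Set MeasureTheory
open scoped Topology

noncomputable section

lemma affine_eval (p : MvPolynomial (Fin 2) ℝ) (hp : p.degreeOf 1 ≤ 1) (s y : ℝ) :
    MvPolynomial.eval ![s, y] p =
      MvPolynomial.eval ![s, 0] p + y * (MvPolynomial.eval ![s, 1] p - MvPolynomial.eval ![s, 0] p) := by
  rw [MvPolynomial.eval_eq', MvPolynomial.eval_eq', MvPolynomial.eval_eq',
    ← Finset.sum_sub_distrib, Finset.mul_sum, ← Finset.sum_add_distrib]
  refine Finset.sum_congr rfl fun m hm => ?_
  have h1 : m 1 ≤ 1 := MvPolynomial.degreeOf_le_iff.mp hp m hm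
  rcases Nat.le_one_iff_eq_zero_or_eq_one.mp h1 with h | h <;>
    simp [Fin.prod_univ_two, h] <;> ring

lemma Rect.isClosed_toSet (c : Rect) : IsClosed c.toSet :=
  isClosed_Icc.prod isClosed_Icc

lemma TMesh.skeleton_isClosed (T : TMesh) : IsClosed T.skeleton :=
  T.finite_cells.isClosed_biUnion fun _ _ => isClosed_frontier

lemma TMesh.cell_subset_outer (T : TMesh) {c : Rect} (hc : c ∈ T.cells) :
    c.toSet ⊆ T.outer.toSet := by
  rw [← T.union_eq]; exact Set.subset_biUnion_of_mem hc

lemma TMesh.skeleton_subset_outer (T : TMesh) : T.skeleton ⊆ T.outer.toSet := by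
  refine Set.iUnion₂_subset fun c hc => ?_
  exact (frontier_subset_closure.trans c.isClosed_toSet.closure_subset).trans
    (T.cell_subset_outer hc)

lemma exists_horizLEdgeAt (T : TMesh) {u v y : ℝ} (huv : u < v)
    (h : Set.Icc u v ×ˢ ({y} : Set ℝ) ⊆ T.skeleton) : ∃ a b, HorizLEdgeAt T a b y := by
  set K : Set ℝ := {x : ℝ | (x, y) ∈ T.skeleton} with hK
  have hKclosed : IsClosed K :=
    T.skeleton_isClosed.preimage (Continuous.prodMk_left y)
  have hKbdd : ∀ x ∈ K, T.outer.xmin ≤ x ∧ x ≤ T.outer.xmax := by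
    intro x hx
    have := T.skeleton_subset_outer hx
    exact ⟨this.1.1, this.1.2⟩
  have hKuv : Set.Icc u v ⊆ K := fun x hx => h ⟨hx, rfl⟩
  have hu : u ∈ K := hKuv ⟨le_refl u, huv.le⟩
  have hv : v ∈ K := hKuv ⟨huv.le, le_refl v⟩
  set Bs : Set ℝ := {t : ℝ | Set.Icc u t ⊆ K} with hBs
  set As : Set ℝ := {t : ℝ | Set.Icc t v ⊆ K} with hAs
  have hvB : v ∈ Bs := hKuv
  have huA : u ∈ As := hKuv
  have hBsbdd : BddAbove Bs := by
    refine ⟨T.outer.xmax, fun t ht => ?_⟩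
    by_contra hlt
    push_neg at hlt
    have hut : u ≤ t := (hKbdd u hu).2.trans hlt.le
    exact absurd (hKbdd t (ht ⟨hut, le_refl t⟩)).2 (not_le.mpr hlt)
  have hAsbdd : BddBelow As := by
    refine ⟨T.outer.xmin, fun t ht => ?_⟩
    by_contra hlt
    push_neg at hlt
    have htv : t ≤ v := hlt.le.trans (hKbdd v hv).1
    exact absurd (hKbdd t (ht ⟨le_refl t, htv⟩)).1 (not_le.mpr hlt)
  set b := sSup Bs with hb
  set a := sInf As with ha
  have hvb : v ≤ b := le_csSup hBsbdd hvB
  have hau : a ≤ u := csInf_le hAsbdd huA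
  have hab : a < b := lt_of_le_of_lt hau (lt_of_lt_of_le huv hvb)
  have hIcoK : ∀ x ∈ Set.Ico u b, x ∈ K := by
    intro x hx
    obtain ⟨t, htB, hxt⟩ := exists_lt_of_lt_csSup ⟨v, hvB⟩ hx.2
    exact htB ⟨hx.1, hxt.le⟩
  have hbK : b ∈ K := by
    have hub : u < b := lt_of_lt_of_le huv hvb
    have : b ∈ closure (Set.Ico u b) := by
      rw [closure_Ico hub.ne]; exact ⟨hub.le, le_refl b⟩
    exact hKclosed.closure_subset ((closure_mono (fun x hx => hIcoK x hx)).trans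
      (hKclosed.closure_eq ▸ le_refl _) this)
  have hIocK : ∀ x ∈ Set.Ioc a v, x ∈ K := by
    intro x hx
    obtain ⟨t, htA, hxt⟩ := exists_lt_of_csInf_lt ⟨u, huA⟩ hx.1
    exact htA ⟨hxt.le, hx.2⟩
  have haK : a ∈ K := by
    have hav : a < v := lt_of_le_of_lt hau huv
    have : a ∈ closure (Set.Ioc a v) := by
      rw [closure_Ioc hav.ne]; exact ⟨le_refl a, hav.le⟩
    exact hKclosed.closure_subset ((closure_mono (fun x hx => hIocK x hx)).trans
      (hKclosed.closure_eq ▸ le_refl _) this)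
  have habK : Set.Icc a b ⊆ K := by
    intro x hx
    rcases le_or_gt x u with hxu | hxu
    · rcases eq_or_lt_of_le hx.1 with heq | hlt
      · rwa [← heq]
      · exact hIocK x ⟨hlt, hxu.trans huv.le⟩
    · rcases eq_or_lt_of_le hx.2 with heq | hlt
      · rwa [heq]
      · exact hIcoK x ⟨hxu.le, hlt⟩
  refine ⟨a, b, hab, Or.inl ⟨a, b, y, hab, rfl⟩, fun p hp => ?_, ?_⟩
  · have h2 : (p.1, y) ∈ T.skeleton := habK hp.1
    have hpe : p = (p.1, y) := Prod.ext rfl hp.2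
    rwa [← hpe] at h2
  rintro s' (⟨a', b', y', hab', rfl⟩ | ⟨x, c, d, hcd, rfl⟩) hs'skel hss
  · have hay : ((a, y) : ℝ × ℝ) ∈ Set.Icc a' b' ×ˢ ({y'} : Set ℝ) :=
      hss ⟨⟨le_refl a, hab.le⟩, rfl⟩
    have hby : ((b, y) : ℝ × ℝ) ∈ Set.Icc a' b' ×ˢ ({y'} : Set ℝ) :=
      hss ⟨⟨hab.le, le_refl b⟩, rfl⟩
    have hyy : y' = y := hay.2.symm
    subst hyy
    have hKsub : Set.Icc a' b' ⊆ K := fun x hx => hs'skel ⟨hx, rfl⟩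
    have hb'B : b' ∈ Bs := fun x hx =>
      hKsub ⟨(hay.1.1.trans hau).trans hx.1, hx.2⟩
    have ha'A : a' ∈ As := fun x hx =>
      hKsub ⟨hx.1, hx.2.trans (hvb.trans hby.1.2)⟩
    have : b' ≤ b := le_csSup hBsbdd hb'B
    have hbb : b' = b := le_antisymm this hby.1.2
    have haa : a' = a := le_antisymm hay.1.1 (csInf_le hAsbdd ha'A)
    rw [haa, hbb]
  · have hay : ((a, y) : ℝ × ℝ) ∈ ({x} : Set ℝ) ×ˢ Set.Icc c d :=
      hss ⟨⟨le_refl a, hab.le⟩, rfl⟩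
    have hby : ((b, y) : ℝ × ℝ) ∈ ({x} : Set ℝ) ×ˢ Set.Icc c d :=
      hss ⟨⟨hab.le, le_refl b⟩, rfl⟩
    exact absurd (hay.1.trans hby.1.symm) hab.ne

lemma frontier_rect (c : Rect) :
    frontier c.toSet = c.toSet \ (Set.Ioo c.xmin c.xmax ×ˢ Set.Ioo c.ymin c.ymax) := by
  rw [c.isClosed_toSet.frontier_eq, Rect.toSet, interior_prod_eq, interior_Icc, interior_Icc]

lemma cell_bottom_subset_skeleton (T : TMesh) {c : Rect} (hc : c ∈ T.cells) :
    Set.Icc c.xmin c.xmax ×ˢ ({c.ymin} : Set ℝ) ⊆ T.skeleton := by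
  intro p hp
  have hpt : p ∈ c.toSet := ⟨hp.1, by rw [hp.2]; exact ⟨le_refl _, c.hy.le⟩⟩
  refine Set.mem_biUnion hc ?_
  rw [frontier_rect]
  exact ⟨hpt, fun hint => by have := hint.2.1; rw [hp.2] at this; exact lt_irrefl _ this⟩

lemma cell_top_subset_skeleton (T : TMesh) {c : Rect} (hc : c ∈ T.cells) :
    Set.Icc c.xmin c.xmax ×ˢ ({c.ymax} : Set ℝ) ⊆ T.skeleton := by
  intro p hp
  have hpt : p ∈ c.toSet := ⟨hp.1, by rw [hp.2]; exact ⟨c.hy.le, le_refl _⟩⟩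
  refine Set.mem_biUnion hc ?_
  rw [frontier_rect]
  exact ⟨hpt, fun hint => by have := hint.2.2; rw [hp.2] at this; exact lt_irrefl _ this⟩

lemma cell_ymin_ledge (T : TMesh) {c : Rect} (hc : c ∈ T.cells) :
    ∃ a b, HorizLEdgeAt T a b c.ymin :=
  exists_horizLEdgeAt T c.hx (cell_bottom_subset_skeleton T hc)

lemma cell_ymax_ledge (T : TMesh) {c : Rect} (hc : c ∈ T.cells) :
    ∃ a b, HorizLEdgeAt T a b c.ymax :=
  exists_horizLEdgeAt T c.hx (cell_top_subset_skeleton T hc)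

lemma ledge_height_bounds (T : TMesh) {a b y : ℝ} (h : HorizLEdgeAt T a b y) :
    T.outer.ymin ≤ y ∧ y ≤ T.outer.ymax := by
  have hmem : ((a, y) : ℝ × ℝ) ∈ Set.Icc a b ×ˢ ({y} : Set ℝ) := ⟨⟨le_refl a, h.1.le⟩, rfl⟩
  have := T.skeleton_subset_outer (h.2.2.1 hmem)
  exact ⟨this.2.1, this.2.2⟩

lemma outer_bottom_ledge (T : TMesh) : ∃ a b, HorizLEdgeAt T a b T.outer.ymin := by
  refine exists_horizLEdgeAt T T.outer.hx ?_
  intro p hp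
  have hpo : p ∈ T.outer.toSet := ⟨hp.1, by rw [hp.2]; exact ⟨le_refl _, T.outer.hy.le⟩⟩
  rw [← T.union_eq] at hpo
  obtain ⟨c, hc, hpc⟩ := Set.mem_iUnion₂.mp hpo
  have hcy : c.ymin = T.outer.ymin := by
    have h1 : T.outer.ymin ≤ c.ymin := by
      have : ((c.xmin, c.ymin) : ℝ × ℝ) ∈ c.toSet :=
        ⟨⟨le_refl _, c.hx.le⟩, ⟨le_refl _, c.hy.le⟩⟩
      exact (T.cell_subset_outer hc this).2.1
    have h2 : c.ymin ≤ T.outer.ymin := by rw [← hp.2]; exact hpc.2.1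
    exact le_antisymm h2 h1
  have : p ∈ Set.Icc c.xmin c.xmax ×ˢ ({c.ymin} : Set ℝ) :=
    ⟨hpc.1, by rw [hcy]; exact hp.2⟩
  exact cell_bottom_subset_skeleton T hc this

lemma outer_top_ledge (T : TMesh) : ∃ a b, HorizLEdgeAt T a b T.outer.ymax := by
  refine exists_horizLEdgeAt T T.outer.hx ?_
  intro p hp
  have hpo : p ∈ T.outer.toSet := ⟨hp.1, by rw [hp.2]; exact ⟨T.outer.hy.le, le_refl _⟩⟩
  rw [← T.union_eq] at hpo
  obtain ⟨c, hc, hpc⟩ := Set.mem_iUnion₂.mp hpo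
  have hcy : c.ymax = T.outer.ymax := by
    have h1 : c.ymax ≤ T.outer.ymax := by
      have : ((c.xmin, c.ymax) : ℝ × ℝ) ∈ c.toSet :=
        ⟨⟨le_refl _, c.hx.le⟩, ⟨c.hy.le, le_refl _⟩⟩
      exact (T.cell_subset_outer hc this).2.2
    have h2 : T.outer.ymax ≤ c.ymax := by rw [← hp.2]; exact hpc.2.2
    exact le_antisymm h1 h2
  have : p ∈ Set.Icc c.xmin c.xmax ×ˢ ({c.ymax} : Set ℝ) :=
    ⟨hpc.1, by rw [hcy]; exact hp.2⟩
  exact cell_top_subset_skeleton T hc this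

/-- **Lemma 4.2.** Let `y₀ < ⋯ < y_n` be the distinct heights of the horizontal l-edges of `T`
and `g ∈ S̄(1,1,0,0,T)`. The derivative-jump conditions at all heights hold iff the integral
of `g` along each interior height vanishes. (The analogous statement for vertical l-edges
follows by instantiating this universally quantified theorem at the transposed mesh.) -/
theorem deriv_jump_iff_line_integral_zero (T : TMesh) (g : ℝ × ℝ → ℝ)
    (hg : g ∈ SBar 1 1 0 0 T)
    (n : ℕ) (ys : ℕ → ℝ) (hmono : ∀ i < n, ys i < ys (i + 1))
    (hys : ∀ y : ℝ, (∃ a b : ℝ, HorizLEdgeAt T a b y) ↔ ∃ i ≤ n, ys i = y) :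
    (∀ i ≤ n, (∫ s in T.outer.xmin..T.outer.xmax, limBelowY (pdY g) (ys i) s) =
        ∫ s in T.outer.xmin..T.outer.xmax, limAboveY (pdY g) (ys i) s) ↔
    (∀ i, 0 < i → i < n → (∫ s in T.outer.xmin..T.outer.xmax, g (s, ys i)) = 0) := by
  obtain ⟨hzero, hpoly, hsmooth⟩ := hg
  have hcont : Continuous g := by
    have h := hsmooth.1 0 0 (by norm_num) (by norm_num)
    rw [← continuousOn_univ]
    simpa [mpW] using h
  have hlt : ∀ i j, i < j → j ≤ n → ys i < ys j := by
    intro i j hij hjn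
    induction j with
    | zero => omega
    | succ k ih =>
      have hk : ys k < ys (k + 1) := hmono k (by omega)
      rcases Nat.lt_succ_iff_lt_or_eq.mp hij with h | h
      · exact (ih h (by omega)).trans hk
      · exact h ▸ hk
  have hle : ∀ i j, i ≤ j → j ≤ n → ys i ≤ ys j := by
    intro i j hij hjn
    rcases eq_or_lt_of_le hij with h | h
    · rw [h]
    · exact (hlt i j h hjn).le
  have hys0 : ys 0 = T.outer.ymin := by
    obtain ⟨a, b, hab⟩ := outer_bottom_ledge T
    obtain ⟨j, hj, hjy⟩ := (hys T.outer.ymin).mp ⟨a, b, hab⟩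
    obtain ⟨a', b', hab'⟩ := (hys (ys 0)).mpr ⟨0, Nat.zero_le n, rfl⟩
    have h1 := (ledge_height_bounds T hab').1
    have h2 : ys 0 ≤ ys j := hle 0 j (Nat.zero_le j) hj
    rw [hjy] at h2
    exact le_antisymm h2 h1
  have hysn : ys n = T.outer.ymax := by
    obtain ⟨a, b, hab⟩ := outer_top_ledge T
    obtain ⟨j, hj, hjy⟩ := (hys T.outer.ymax).mp ⟨a, b, hab⟩
    obtain ⟨a', b', hab'⟩ := (hys (ys n)).mpr ⟨n, le_refl n, rfl⟩
    have h1 := (ledge_height_bounds T hab').2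
    have h2 : ys j ≤ ys n := hle j n hj (le_refl n)
    rw [hjy] at h2
    exact le_antisymm h1 h2
  have hn : 0 < n := by
    rcases Nat.eq_zero_or_pos n with h | h
    · exfalso
      have hyy := T.outer.hy
      rw [← hys0, ← hysn, h, hys0] at hyy
      exact lt_irrefl _ hyy
    · exact h
  have hcellmin : ∀ c ∈ T.cells, ∃ j ≤ n, ys j = c.ymin := fun c hc =>
    (hys c.ymin).mp (cell_ymin_ledge T hc)
  have hcellmax : ∀ c ∈ T.cells, ∃ j ≤ n, ys j = c.ymax := fun c hc =>
    (hys c.ymax).mp (cell_ymax_ledge T hc)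
  -- the key affine formula on each horizontal strip
  have key : ∀ i < n, ∀ s ∈ Set.Icc T.outer.xmin T.outer.xmax,
      ∀ y ∈ Set.Icc (ys i) (ys (i + 1)),
      g (s, y) = g (s, ys i) +
        (y - ys i) * ((g (s, ys (i + 1)) - g (s, ys i)) / (ys (i + 1) - ys i)) := by
    intro i hi s hs y hy
    have hΔ : ys i < ys (i + 1) := hmono i hi
    have hΔne : ys (i + 1) - ys i ≠ 0 := sub_ne_zero.mpr hΔ.ne'
    rcases eq_or_lt_of_le hy.1 with h1 | h1
    · rw [← h1]; simp
    rcases eq_or_lt_of_le hy.2 with h2 | h2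
    · rw [h2]; field_simp; ring
    have hyΩ : ((s, y) : ℝ × ℝ) ∈ T.outer.toSet := by
      refine ⟨hs, ⟨?_, ?_⟩⟩
      · rw [← hys0]; exact (hle 0 i (Nat.zero_le i) hi.le).trans h1.le
      · rw [← hysn]; exact h2.le.trans (hle (i + 1) n hi (le_refl n))
    rw [← T.union_eq] at hyΩ
    obtain ⟨c, hc, hpc⟩ := Set.mem_iUnion₂.mp hyΩ
    have hcymin : c.ymin ≤ ys i := by
      obtain ⟨j, hj, hjy⟩ := hcellmin c hc
      by_contra hlt'
      push_neg at hlt'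
      have hij : i < j := by
        by_contra hji
        push_neg at hji
        exact absurd (hjy ▸ hle j i hji hi.le) (not_le.mpr hlt')
      have hthis : ys (i + 1) ≤ ys j := hle (i + 1) j hij hj
      rw [hjy] at hthis
      exact absurd hpc.2.1 (not_le.mpr (lt_of_lt_of_le h2 hthis))
    have hcymax : ys (i + 1) ≤ c.ymax := by
      obtain ⟨j, hj, hjy⟩ := hcellmax c hc
      by_contra hlt'
      push_neg at hlt'
      have hji : j ≤ i := by
        by_contra h'
        push_neg at h'
        exact absurd (hjy ▸ hle (i + 1) j h' hj) (not_le.mpr hlt')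
      have hthis : ys j ≤ ys i := hle j i hji hi.le
      rw [hjy] at hthis
      exact absurd hpc.2.2 (not_le.mpr (lt_of_le_of_lt hthis h1))
    obtain ⟨p, hpx, hpy, hpeval⟩ := hpoly c hc
    have hev : ∀ y' ∈ Set.Icc (ys i) (ys (i + 1)), g (s, y') =
        MvPolynomial.eval ![s, 0] p +
          y' * (MvPolynomial.eval ![s, 1] p - MvPolynomial.eval ![s, 0] p) := by
      intro y' hy'
      have hmem : ((s, y') : ℝ × ℝ) ∈ c.toSet :=
        ⟨hpc.1, ⟨hcymin.trans hy'.1, hy'.2.trans hcymax⟩⟩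
      rw [hpeval _ hmem]
      exact affine_eval p hpy s y'
    rw [hev y hy, hev (ys i) ⟨le_refl _, hΔ.le⟩, hev (ys (i + 1)) ⟨hΔ.le, le_refl _⟩]
    field_simp
    ring
  -- the cell-wise y-derivative on each open strip
  have hpd : ∀ i < n, ∀ s ∈ Set.Icc T.outer.xmin T.outer.xmax,
      ∀ t ∈ Set.Ioo (ys i) (ys (i + 1)),
      pdY g (s, t) = (g (s, ys (i + 1)) - g (s, ys i)) / (ys (i + 1) - ys i) := by
    intro i hi s hs t ht
    set C := (g (s, ys (i + 1)) - g (s, ys i)) / (ys (i + 1) - ys i) with hC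
    have hD : HasDerivAt (fun y => g (s, ys i) + (y - ys i) * C) (1 * C) t :=
      (((hasDerivAt_id t).sub_const (ys i)).mul_const C).const_add _
    have heq : (fun y => g (s, y)) =ᶠ[nhds t] fun y => g (s, ys i) + (y - ys i) * C := by
      filter_upwards [Ioo_mem_nhds ht.1 ht.2] with y hy
      exact key i hi s hs y ⟨hy.1.le, hy.2.le⟩
    have hD' : HasDerivAt (fun y => g (s, y)) (1 * C) t := hD.congr_of_eventuallyEq heq
    show deriv (fun y => g (s, y)) t = C
    rw [hD'.deriv]; ring
  -- one-sided limits on interior heights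
  have hbelows : ∀ j < n, ∀ s ∈ Set.Icc T.outer.xmin T.outer.xmax,
      limBelowY (pdY g) (ys (j + 1)) s
        = (g (s, ys (j + 1)) - g (s, ys j)) / (ys (j + 1) - ys j) := by
    intro j hj s hs
    have hmem : Set.Ioo (ys j) (ys (j + 1)) ∈ nhdsWithin (ys (j + 1)) (Set.Iio (ys (j + 1))) :=
      Ioo_mem_nhdsLT_of_mem ⟨hmono j hj, le_refl _⟩
    have htends : Filter.Tendsto (fun t => pdY g (s, t))
        (nhdsWithin (ys (j + 1)) (Set.Iio (ys (j + 1))))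
        (nhds ((g (s, ys (j + 1)) - g (s, ys j)) / (ys (j + 1) - ys j))) := by
      refine tendsto_const_nhds.congr' ?_
      filter_upwards [hmem] with t ht
      exact (hpd j hj s hs t ht).symm
    exact htends.limUnder_eq
  have haboves : ∀ j < n, ∀ s ∈ Set.Icc T.outer.xmin T.outer.xmax,
      limAboveY (pdY g) (ys j) s
        = (g (s, ys (j + 1)) - g (s, ys j)) / (ys (j + 1) - ys j) := by
    intro j hj s hs
    have hmem : Set.Ioo (ys j) (ys (j + 1)) ∈ nhdsWithin (ys j) (Set.Ioi (ys j)) :=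
      Ioo_mem_nhdsGT_of_mem ⟨le_refl _, hmono j hj⟩
    have htends : Filter.Tendsto (fun t => pdY g (s, t))
        (nhdsWithin (ys j) (Set.Ioi (ys j)))
        (nhds ((g (s, ys (j + 1)) - g (s, ys j)) / (ys (j + 1) - ys j))) := by
      refine tendsto_const_nhds.congr' ?_
      filter_upwards [hmem] with t ht
      exact (hpd j hj s hs t ht).symm
    exact htends.limUnder_eq
  -- one-sided limits below the bottom and above the top are zero
  have hbelow0 : ∀ s : ℝ, limBelowY (pdY g) (ys 0) s = 0 := by
    intro s
    have hz : ∀ t ∈ Set.Iio (ys 0), pdY g (s, t) = 0 := by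
      intro t ht
      have heq : (fun y => g (s, y)) =ᶠ[nhds t] fun _ => (0 : ℝ) := by
        filter_upwards [Iio_mem_nhds ht] with y hy
        refine hzero (s, y) fun hmem => ?_
        have h2 : T.outer.ymin ≤ y := hmem.2.1
        rw [← hys0] at h2
        exact absurd h2 (not_le.mpr hy)
      show deriv (fun y => g (s, y)) t = 0
      rw [heq.deriv_eq]
      exact deriv_const t 0
    have htends : Filter.Tendsto (fun t => pdY g (s, t))
        (nhdsWithin (ys 0) (Set.Iio (ys 0))) (nhds 0) := by
      refine tendsto_const_nhds.congr' ?_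
      filter_upwards [self_mem_nhdsWithin] with t ht
      exact (hz t ht).symm
    exact htends.limUnder_eq
  have haboven : ∀ s : ℝ, limAboveY (pdY g) (ys n) s = 0 := by
    intro s
    have hz : ∀ t ∈ Set.Ioi (ys n), pdY g (s, t) = 0 := by
      intro t ht
      have heq : (fun y => g (s, y)) =ᶠ[nhds t] fun _ => (0 : ℝ) := by
        filter_upwards [Ioi_mem_nhds ht] with y hy
        refine hzero (s, y) fun hmem => ?_
        have h2 : y ≤ T.outer.ymax := hmem.2.2
        rw [← hysn] at h2
        exact absurd h2 (not_le.mpr hy)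
      show deriv (fun y => g (s, y)) t = 0
      rw [heq.deriv_eq]
      exact deriv_const t 0
    have htends : Filter.Tendsto (fun t => pdY g (s, t))
        (nhdsWithin (ys n) (Set.Ioi (ys n))) (nhds 0) := by
      refine tendsto_const_nhds.congr' ?_
      filter_upwards [self_mem_nhdsWithin] with t ht
      exact (hz t ht).symm
    exact htends.limUnder_eq
  -- boundary values of g vanish
  have hgy0 : ∀ s : ℝ, g (s, ys 0) = 0 := by
    intro s
    have hc1 : Filter.Tendsto (fun y => g (s, y))
        (nhdsWithin (ys 0) (Set.Iio (ys 0))) (nhds (g (s, ys 0))) :=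
      ((hcont.comp (Continuous.prodMk_right s)).tendsto (ys 0)).mono_left nhdsWithin_le_nhds
    have hc2 : Filter.Tendsto (fun y => g (s, y))
        (nhdsWithin (ys 0) (Set.Iio (ys 0))) (nhds 0) := by
      refine tendsto_const_nhds.congr' ?_
      filter_upwards [self_mem_nhdsWithin] with y hy
      refine (hzero (s, y) fun hmem => ?_).symm
      have h2 : T.outer.ymin ≤ y := hmem.2.1
      rw [← hys0] at h2
      exact absurd h2 (not_le.mpr hy)
    exact tendsto_nhds_unique hc1 hc2
  have hgyn : ∀ s : ℝ, g (s, ys n) = 0 := by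
    intro s
    have hc1 : Filter.Tendsto (fun y => g (s, y))
        (nhdsWithin (ys n) (Set.Ioi (ys n))) (nhds (g (s, ys n))) :=
      ((hcont.comp (Continuous.prodMk_right s)).tendsto (ys n)).mono_left nhdsWithin_le_nhds
    have hc2 : Filter.Tendsto (fun y => g (s, y))
        (nhdsWithin (ys n) (Set.Ioi (ys n))) (nhds 0) := by
      refine tendsto_const_nhds.congr' ?_
      filter_upwards [self_mem_nhdsWithin] with y hy
      refine (hzero (s, y) fun hmem => ?_).symm
      have h2 : y ≤ T.outer.ymax := hmem.2.2
      rw [← hysn] at h2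
      exact absurd h2 (not_le.mpr hy)
    exact tendsto_nhds_unique hc1 hc2
  -- the line integrals
  set Fy : ℕ → ℝ := fun i => ∫ s in T.outer.xmin..T.outer.xmax, g (s, ys i) with hFy
  have hFint : ∀ y : ℝ, IntervalIntegrable (fun s => g (s, y)) MeasureTheory.volume
      T.outer.xmin T.outer.xmax := fun y =>
    (hcont.comp (Continuous.prodMk_left y)).intervalIntegrable _ _
  have hFy0 : Fy 0 = 0 := by
    have h1 : (∫ s in T.outer.xmin..T.outer.xmax, g (s, ys 0))
        = ∫ _s in T.outer.xmin..T.outer.xmax, (0 : ℝ) :=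
      intervalIntegral.integral_congr fun s _ => hgy0 s
    simpa [hFy] using h1
  have hFyn : Fy n = 0 := by
    have h1 : (∫ s in T.outer.xmin..T.outer.xmax, g (s, ys n))
        = ∫ _s in T.outer.xmin..T.outer.xmax, (0 : ℝ) :=
      intervalIntegral.integral_congr fun s _ => hgyn s
    simpa [hFy] using h1
  have hBint : ∀ j < n, (∫ s in T.outer.xmin..T.outer.xmax, limBelowY (pdY g) (ys (j + 1)) s)
      = (Fy (j + 1) - Fy j) / (ys (j + 1) - ys j) := by
    intro j hj
    have hcongr : (∫ s in T.outer.xmin..T.outer.xmax, limBelowY (pdY g) (ys (j + 1)) s)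
        = ∫ s in T.outer.xmin..T.outer.xmax,
            (g (s, ys (j + 1)) - g (s, ys j)) / (ys (j + 1) - ys j) := by
      refine intervalIntegral.integral_congr fun s hs => ?_
      rw [Set.uIcc_of_le T.outer.hx.le] at hs
      exact hbelows j hj s hs
    rw [hcongr, intervalIntegral.integral_div,
      intervalIntegral.integral_sub (hFint _) (hFint _)]
  have hAint : ∀ j < n, (∫ s in T.outer.xmin..T.outer.xmax, limAboveY (pdY g) (ys j) s)
      = (Fy (j + 1) - Fy j) / (ys (j + 1) - ys j) := by
    intro j hj
    have hcongr : (∫ s in T.outer.xmin..T.outer.xmax, limAboveY (pdY g) (ys j) s)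
        = ∫ s in T.outer.xmin..T.outer.xmax,
            (g (s, ys (j + 1)) - g (s, ys j)) / (ys (j + 1) - ys j) := by
      refine intervalIntegral.integral_congr fun s hs => ?_
      rw [Set.uIcc_of_le T.outer.hx.le] at hs
      exact haboves j hj s hs
    rw [hcongr, intervalIntegral.integral_div,
      intervalIntegral.integral_sub (hFint _) (hFint _)]
  have hBint0 : (∫ s in T.outer.xmin..T.outer.xmax, limBelowY (pdY g) (ys 0) s) = 0 := by
    have h1 : (∫ s in T.outer.xmin..T.outer.xmax, limBelowY (pdY g) (ys 0) s)
        = ∫ _s in T.outer.xmin..T.outer.xmax, (0 : ℝ) :=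
      intervalIntegral.integral_congr fun s _ => hbelow0 s
    simpa using h1
  have hAintn : (∫ s in T.outer.xmin..T.outer.xmax, limAboveY (pdY g) (ys n) s) = 0 := by
    have h1 : (∫ s in T.outer.xmin..T.outer.xmax, limAboveY (pdY g) (ys n) s)
        = ∫ _s in T.outer.xmin..T.outer.xmax, (0 : ℝ) :=
      intervalIntegral.integral_congr fun s _ => haboven s
    simpa using h1
  constructor
  · intro H i hi0 hin
    have hs0 : ∀ j, j < n → (Fy (j + 1) - Fy j) / (ys (j + 1) - ys j) = 0 := by
      intro j
      induction j with
      | zero =>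
        intro hj
        have h := H 0 (Nat.zero_le n)
        rw [hBint0, hAint 0 hj] at h
        exact h.symm
      | succ k ih =>
        intro hj
        have hk : k < n := by omega
        have h := H (k + 1) (by omega)
        rw [hBint k hk, hAint (k + 1) hj] at h
        rw [← h]
        exact ih hk
    have hFyall : ∀ i, i ≤ n → Fy i = 0 := by
      intro i
      induction i with
      | zero => intro _; exact hFy0
      | succ k ih =>
        intro hk
        have hkn : k < n := by omega
        have hz := hs0 k hkn
        have hΔne : ys (k + 1) - ys k ≠ 0 := sub_ne_zero.mpr (hmono k hkn).ne'
        have hsub : Fy (k + 1) - Fy k = 0 := by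
          rcases div_eq_zero_iff.mp hz with h | h
          · exact h
          · exact absurd h hΔne
        have hik := ih (by omega)
        linarith
    exact hFyall i hin.le
  · intro H i hin
    have hFyall : ∀ i, i ≤ n → Fy i = 0 := by
      intro i hi
      rcases Nat.eq_zero_or_pos i with h0 | h0
      · rw [h0]; exact hFy0
      rcases eq_or_lt_of_le hi with hN | hN
      · rw [hN]; exact hFyn
      · exact H i h0 hN
    rcases Nat.eq_zero_or_pos i with h0 | h0
    · subst h0
      rw [hBint0, hAint 0 hn, hFyall 1 hn, hFyall 0 (Nat.zero_le n)]
      simp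
    rcases eq_or_lt_of_le hin with hN | hN
    · subst hN
      obtain ⟨j, rfl⟩ : ∃ j, i = j + 1 := ⟨i - 1, by omega⟩
      rw [hAintn, hBint j (by omega), hFyall (j + 1) (le_refl _), hFyall j (by omega)]
      simp
    · obtain ⟨j, rfl⟩ : ∃ j, i = j + 1 := ⟨i - 1, by omega⟩
      rw [hBint j (by omega), hAint (j + 1) hN, hFyall (j + 1) hin,
        hFyall j (by omega), hFyall (j + 2) hN]
      simp
end
end
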